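/- arXiv:2310.20551 — 7 statements merged into one kernel-verified Lean document; each statement's English description precedes it below -/
import Mathlib

section
/- Let σ be an exact and costable preradical on R-Mod, and let σ' be the preradical defined by σ'(M) = {m ∈ M : a·m = 0 for all a ∈ σ(R)}. If R satisfies (σ-HH) and (σ'-HH), then R satisfies (HH), i.e. for all R-modules M and N, Hom_R(N, M) ≠ 0 if and only if Hom_R(M, N) ≠ 0. -/
/-! Basic framework: bundled left `R`-modules (in the same universe as `R`),
preradicals on `R`-Mod, and the notions from the paper
"On σ-classes of modules with applications". -/

universe u

/-- A bundled left `R`-module whose underlying type lives in the same universe as `R`. -/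
structure RMod (R : Type u) [Ring R] : Type (u + 1) where
  carrier : Type u
  [isAddCommGroup : AddCommGroup carrier]
  [isModule : Module R carrier]

attribute [instance] RMod.isAddCommGroup RMod.isModule

instance (R : Type u) [Ring R] : CoeSort (RMod R) (Type u) :=
  ⟨RMod.carrier⟩

/-- Bundle a module into `RMod R`. -/
@[reducible] def RMod.of (R : Type u) [Ring R] (M : Type u) [AddCommGroup M] [Module R M] :
    RMod R := ⟨M⟩

/-- A preradical on `R`-Mod: a subfunctor of the identity functor, i.e. an assignment
`M ↦ σ(M) ≤ M` such that `f(σ(M)) ≤ σ(N)` for every `R`-linear map `f : M → N`. -/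
structure Preradical (R : Type u) [Ring R] : Type (u + 1) where
  app : ∀ M : RMod R, Submodule R (M : Type u)
  map_le : ∀ {M N : RMod R} (f : (M : Type u) →ₗ[R] (N : Type u)),
    (app M).map f ≤ app N

namespace Preradical

variable {R : Type u} [Ring R]

/-- `σ` evaluated on an unbundled module. -/
@[reducible] def ap (σ : Preradical R) (M : Type u) [AddCommGroup M] [Module R M] :
    Submodule R M :=
  σ.app (RMod.of R M)

/-- `σ` is cohereditary: `f(σ(M)) = σ(N)` for every surjective `f : M → N`. -/
def Cohereditary (σ : Preradical R) : Prop :=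
  ∀ (M N : RMod R) (f : (M : Type u) →ₗ[R] (N : Type u)), Function.Surjective f →
    (σ.app M).map f = σ.app N

/-- `σ` is a radical: `σ(M/σ(M)) = 0` for every `M`. -/
def IsRadical (σ : Preradical R) : Prop :=
  ∀ M : RMod R, σ.ap ((M : Type u) ⧸ σ.app M) = ⊥

/-- The torsion-free class `F_σ = {M : σ(M) = 0}` is closed under quotients. -/
def TorsionFreeClosedUnderQuotients (σ : Preradical R) : Prop :=
  ∀ (M N : RMod R) (f : (M : Type u) →ₗ[R] (N : Type u)), Function.Surjective f →
    σ.app M = ⊥ → σ.app N = ⊥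

/-- The submodule `σ(R)M` of `M`, generated by `{a • m : a ∈ σ(R), m ∈ M}`. -/
def idealSMulTop (σ : Preradical R) (M : RMod R) : Submodule R (M : Type u) :=
  Submodule.span R {x : (M : Type u) | ∃ a ∈ σ.ap R, ∃ m : (M : Type u), x = a • m}

/-- `σ` is left exact: `σ(A) = A ∩ σ(B)` whenever `A` is a submodule of `B`. -/
def LeftExact (σ : Preradical R) : Prop :=
  ∀ (B : RMod R) (A : Submodule R (B : Type u)),
    (σ.ap ↥A).map A.subtype = A ⊓ σ.app B

/-- `σ` centrally splits: there is a central idempotent `e ∈ R` with `σ(M) = eM`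
for every module `M`. -/
def CentrallySplits (σ : Preradical R) : Prop :=
  ∃ e : R, e ∈ Set.center R ∧ e * e = e ∧
    ∀ M : RMod R, (σ.app M : Set (M : Type u)) = Set.range fun m : (M : Type u) => e • m

/-- `σ` is stable: `σ(E)` is a direct summand of `E` for every injective module `E`. -/
def Stable (σ : Preradical R) : Prop :=
  ∀ E : RMod R, Module.Injective R (E : Type u) →
    ∃ K : Submodule R (E : Type u), IsCompl (σ.app E) K

/-- `σ` is costable: `σ(P)` is a direct summand of `P` for every projective module `P`. -/
def Costable (σ : Preradical R) : Prop :=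
  ∀ P : RMod R, Module.Projective R (P : Type u) →
    ∃ K : Submodule R (P : Type u), IsCompl (σ.app P) K

/-- The condition `(σ-HH)`: for all modules `M`, `N` with `σ(M) ≠ 0` and `σ(N) ≠ 0`,
`Hom(σ(N), M) ≠ 0` iff `Hom(M, σ(N)) ≠ 0`. -/
def HH (σ : Preradical R) : Prop :=
  ∀ M N : RMod R, σ.app M ≠ ⊥ → σ.app N ≠ ⊥ →
    ((∃ f : ↥(σ.app N) →ₗ[R] (M : Type u), f ≠ 0) ↔
      (∃ f : (M : Type u) →ₗ[R] ↥(σ.app N), f ≠ 0))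

/-- `R` is σ-(R-Mod)-retractable: for every `M` and every `N ≤ M` with `σ(N) ≠ 0`,
`Hom(M, σ(N)) ≠ 0`. -/
def Retractable (σ : Preradical R) : Prop :=
  ∀ (M : RMod R) (N : Submodule R (M : Type u)), σ.ap ↥N ≠ ⊥ →
    ∃ f : (M : Type u) →ₗ[R] ↥(σ.ap ↥N), f ≠ 0

end Preradical

/-- `M` is parainjective: whenever `M` embeds in `N`, `M` is a quotient of `N`. -/
def Parainjective (R : Type u) [Ring R] (M : Type u) [AddCommGroup M] [Module R M] : Prop :=
  ∀ N : RMod R, (∃ f : M →ₗ[R] (N : Type u), Function.Injective f) →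
    ∃ g : (N : Type u) →ₗ[R] M, Function.Surjective g

/-- `M` is paraprojective: whenever `M` is a quotient of `N`, `M` embeds in `N`. -/
def Paraprojective (R : Type u) [Ring R] (M : Type u) [AddCommGroup M] [Module R M] : Prop :=
  ∀ N : RMod R, (∃ f : (N : Type u) →ₗ[R] M, Function.Surjective f) →
    ∃ g : M →ₗ[R] (N : Type u), Function.Injective g

namespace Preradical

variable {R : Type u} [Ring R]

/-- `R` is a left σ-max ring: every nonzero quotient `L` of any module `M` with
`σ(L) ≠ 0` has a σ-torsion simple quotient. -/
def SigmaMax (σ : Preradical R) : Prop :=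
  ∀ (M L : RMod R) (f : (M : Type u) →ₗ[R] (L : Type u)), Function.Surjective f →
    Nontrivial (L : Type u) → σ.app L ≠ ⊥ →
    ∃ K : Submodule R (L : Type u),
      IsSimpleModule R ((L : Type u) ⧸ K) ∧ σ.ap ((L : Type u) ⧸ K) = ⊤

/-- `R` is left σ-semiartinian: every nonzero submodule `N` of any module `M` with
`σ(N) ≠ 0` contains a σ-torsion simple submodule. -/
def SigmaSemiartinian (σ : Preradical R) : Prop :=
  ∀ (M : RMod R) (N : Submodule R (M : Type u)), N ≠ ⊥ → σ.ap ↥N ≠ ⊥ →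
    ∃ S : Submodule R (M : Type u), S ≤ N ∧ IsSimpleModule R ↥S ∧ σ.ap ↥S = ⊤

/-- `R` is a σ-(BKN)-ring: `Hom(σ(N), σ(M)) ≠ 0` for all `M`, `N` with
`σ(M) ≠ 0 ≠ σ(N)`. -/
def BKN (σ : Preradical R) : Prop :=
  ∀ M N : RMod R, σ.app M ≠ ⊥ → σ.app N ≠ ⊥ →
    ∃ f : ↥(σ.app N) →ₗ[R] ↥(σ.app M), f ≠ 0

/-- `R` is a left σ-local ring: up to isomorphism there is exactly one σ-torsion
simple module. -/
def SigmaLocal (σ : Preradical R) : Prop :=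
  (∃ S : RMod R, IsSimpleModule R (S : Type u) ∧ σ.app S = ⊤) ∧
  ∀ S T : RMod R, IsSimpleModule R (S : Type u) → σ.app S = ⊤ →
    IsSimpleModule R (T : Type u) → σ.app T = ⊤ →
    Nonempty ((S : Type u) ≃ₗ[R] (T : Type u))

end Preradical

/-- A class of modules is closed under isomorphism. -/
def RespectsIso (R : Type u) [Ring R] (C : RMod R → Prop) : Prop :=
  ∀ M N : RMod R, Nonempty ((M : Type u) ≃ₗ[R] (N : Type u)) → C M → C N

namespace Preradical

variable {R : Type u} [Ring R]

/-- `C` is a σ-cohereditary class: `F_σ ⊆ C`, and `σ(L) ∈ C` for every `M ∈ C` and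
every quotient `L` of `M`. -/
def SigmaCohereditaryClass (σ : Preradical R) (C : RMod R → Prop) : Prop :=
  (∀ M : RMod R, σ.app M = ⊥ → C M) ∧
  ∀ (M L : RMod R) (f : (M : Type u) →ₗ[R] (L : Type u)), Function.Surjective f → C M →
    C (RMod.of R ↥(σ.app L))

/-- `C` is a σ-hereditary class: `F_σ ⊆ C`, and `σ(N) ∈ C` for every `M ∈ C` and
every submodule `N ≤ M`. -/
def SigmaHereditaryClass (σ : Preradical R) (C : RMod R → Prop) : Prop :=
  (∀ M : RMod R, σ.app M = ⊥ → C M) ∧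
  ∀ (M : RMod R) (N : Submodule R (M : Type u)), C M → C (RMod.of R ↥(σ.ap ↥N))

/-- `C` is closed under arbitrary direct sums. -/
def ClassClosedUnderDirectSums (C : RMod R → Prop) : Prop :=
  ∀ (ι : Type u) (M : ι → RMod R), (∀ i, C (M i)) →
    C (RMod.of R (DirectSum ι fun i => ((M i) : Type u)))

/-- `C` is closed under extensions. -/
def ClassClosedUnderExtensions (C : RMod R → Prop) : Prop :=
  ∀ (M : RMod R) (A : Submodule R (M : Type u)),
    C (RMod.of R ↥A) → C (RMod.of R ((M : Type u) ⧸ A)) → C M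

/-- `C` is a σ-torsion class: a σ-cohereditary class closed under arbitrary direct
sums and under extensions. -/
def SigmaTorsionClass (σ : Preradical R) (C : RMod R → Prop) : Prop :=
  σ.SigmaCohereditaryClass C ∧ ClassClosedUnderDirectSums C ∧ ClassClosedUnderExtensions C

/-- `C` is a hereditary σ-torsion class. -/
def HereditarySigmaTorsionClass (σ : Preradical R) (C : RMod R → Prop) : Prop :=
  σ.SigmaTorsionClass C ∧ σ.SigmaHereditaryClass C

/-- `C` satisfies the condition `(σ-CN)`. -/
def SigmaCN (σ : Preradical R) (C : RMod R → Prop) : Prop :=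
  ∀ M : RMod R,
    (∀ (L : RMod R) (f : (M : Type u) →ₗ[R] (L : Type u)), Function.Surjective f →
      σ.app L ≠ ⊥ →
      ∃ C₀ N : RMod R, C C₀ ∧ σ.app N ≠ ⊥ ∧
        (∃ g : (L : Type u) →ₗ[R] (N : Type u), Function.Surjective g) ∧
        (∃ h : (C₀ : Type u) →ₗ[R] (N : Type u), Function.Surjective h)) →
    C M

/-- `C` satisfies the condition `(σ-N)`. -/
def SigmaN (σ : Preradical R) (C : RMod R → Prop) : Prop :=
  ∀ M : RMod R,
    (∀ L : Submodule R (M : Type u), σ.ap ↥L ≠ ⊥ →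
      ∃ C₀ N : RMod R, C C₀ ∧ σ.app N ≠ ⊥ ∧
        (∃ g : (N : Type u) →ₗ[R] ↥L, Function.Injective g) ∧
        (∃ h : (N : Type u) →ₗ[R] (C₀ : Type u), Function.Injective h)) →
    C M

/-- The pseudocomplement `D^{⊥/σ}` of a class `D`:
`{M : every quotient L of M with σ(L) ≠ 0 satisfies σ(L) ∉ D} ∪ F_σ`. -/
def Perp (σ : Preradical R) (D : RMod R → Prop) : RMod R → Prop := fun M =>
  (∀ (L : RMod R) (f : (M : Type u) →ₗ[R] (L : Type u)), Function.Surjective f →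
    σ.app L ≠ ⊥ → ¬ D (RMod.of R ↥(σ.app L))) ∨ σ.app M = ⊥

/-- `C` is a σ-natural class: there is a σ-hereditary class `A` with
`C = {M : for every N ≤ M with σ(N) ∈ A one has σ(N) = 0}`. -/
def SigmaNaturalClass (σ : Preradical R) (C : RMod R → Prop) : Prop :=
  ∃ A : RMod R → Prop, RespectsIso R A ∧ σ.SigmaHereditaryClass A ∧
    ∀ M : RMod R, C M ↔
      ∀ N : Submodule R (M : Type u), A (RMod.of R ↥(σ.ap ↥N)) → σ.ap ↥N = ⊥

end Preradical

/-- For `σ` exact and costable, with `σ'` the complementary preradical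
`σ'(M) = {m ∈ M : a • m = 0 for all a ∈ σ(R)}`: if `R` satisfies `(σ-HH)` and
`(σ'-HH)`, then `R` satisfies `(HH)`. -/
theorem hh_of_sigma_hh_and_sigma'_hh {R : Type u} [Ring R] (σ σ' : Preradical R)
    (hle : σ.LeftExact) (hco : σ.Cohereditary) (hcost : σ.Costable)
    (hσ' : ∀ M : RMod R,
      (σ'.app M : Set (M : Type u)) = {m : (M : Type u) | ∀ a ∈ σ.ap R, a • m = 0})
    (h1 : σ.HH) (h2 : σ'.HH) :
    ∀ M N : RMod R,
      (∃ f : (N : Type u) →ₗ[R] (M : Type u), f ≠ 0) ↔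
      (∃ f : (M : Type u) →ₗ[R] (N : Type u), f ≠ 0) := by
  classical
  -- `R` as a bundled module and the torsion ideal `I = σ(R)`.
  obtain ⟨K, hK⟩ := hcost (RMod.of R R) inferInstance
  -- σ(K) = 0
  have hKbot : σ.ap ↥K = ⊥ := by
    have h := hle (RMod.of R R) K
    have h2 : K ⊓ σ.app (RMod.of R R) = ⊥ := by
      rw [inf_comm]; exact hK.inf_eq_bot
    rw [h2] at h
    rw [eq_bot_iff]
    intro y hy
    have : K.subtype y ∈ (⊥ : Submodule R R) := by
      rw [← h]; exact Submodule.mem_map_of_mem hy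
    have hy0 : (y : R) = 0 := Submodule.mem_bot _ |>.mp this
    exact Subtype.ext hy0
  -- I·K = 0
  have IK0 : ∀ a ∈ σ.ap R, ∀ x ∈ K, a * x = 0 := by
    intro a ha x hx
    have hmap := σ.map_le (M := RMod.of R R) (N := RMod.of R ↥K)
      (LinearMap.toSpanSingleton R ↥K ⟨x, hx⟩)
    have h1' : LinearMap.toSpanSingleton R ↥K ⟨x, hx⟩ a ∈ σ.ap ↥K :=
      hmap (Submodule.mem_map_of_mem ha)
    rw [hKbot] at h1'
    have h2' : a • (⟨x, hx⟩ : ↥K) = 0 := by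
      rw [← LinearMap.toSpanSingleton_apply]; exact Submodule.mem_bot _ |>.mp h1'
    have h3' : a • x = (0 : R) := congrArg Subtype.val h2'
    simpa [smul_eq_mul] using h3'
  -- decompose 1 = e + k
  have h1mem : (1 : R) ∈ σ.ap R ⊔ K := by
    rw [hK.sup_eq_top]; trivial
  obtain ⟨e, heI, k, hkK, hek⟩ := Submodule.mem_sup.mp h1mem
  -- `e` is a right unit of `I`
  have hae : ∀ a ∈ σ.ap R, a * e = a := by
    intro a ha
    have h0 : a * k = 0 := IK0 a ha k hkK
    have h1' : a * (e + k) = a := by rw [hek, mul_one]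
    rwa [mul_add, h0, add_zero] at h1'
  -- workhorse: any torsion element is fixed by some element of `I`
  have W : ∀ (X : RMod R) (m : (X : Type u)), m ∈ σ.app X → ∃ a ∈ σ.ap R, a • m = m := by
    intro X m hm
    have hmN : m ∈ Submodule.span R ({m} : Set (X : Type u)) :=
      Submodule.mem_span_singleton_self m
    set N : Submodule R (X : Type u) := Submodule.span R {m} with hN
    set ψ : R →ₗ[R] ↥N := LinearMap.toSpanSingleton R ↥N ⟨m, hmN⟩ with hψ
    have hsurj : Function.Surjective ψ := by
      rintro ⟨y, hy⟩
      obtain ⟨a, ha⟩ := Submodule.mem_span_singleton.mp hy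
      refine ⟨a, Subtype.ext ?_⟩
      simpa [hψ, LinearMap.toSpanSingleton_apply] using ha
    have hcoN := hco (RMod.of R R) (RMod.of R ↥N) ψ hsurj
    have hleN := hle X N
    have hmem : m ∈ N ⊓ σ.app X := ⟨hmN, hm⟩
    rw [← hleN] at hmem
    obtain ⟨y, hy, hyv⟩ := hmem
    have hy2 : y ∈ Submodule.map ψ (σ.app (RMod.of R R)) := by rw [hcoN]; exact hy
    obtain ⟨a, haI, hay⟩ := hy2
    refine ⟨a, haI, ?_⟩
    have h5 : ((ψ a : ↥N) : (X : Type u)) = m := by rw [hay]; exact hyv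
    simpa [hψ, LinearMap.toSpanSingleton_apply] using h5
  -- torsion elements of `R` killed by `I` are zero
  have KL : ∀ b ∈ σ.ap R, (∀ a ∈ σ.ap R, a * b = 0) → b = 0 := by
    intro b hb h0
    obtain ⟨a, haI, hab⟩ := W (RMod.of R R) b hb
    rw [smul_eq_mul] at hab
    rw [← hab]; exact h0 a haI
  -- `e` is a left unit of `I`
  have hea : ∀ a ∈ σ.ap R, e * a = a := by
    intro a ha
    have hb : a - e * a ∈ σ.ap R := by
      have h1' : e • a ∈ σ.ap R := Submodule.smul_mem _ e ha
      exact Submodule.sub_mem _ ha (by simpa [smul_eq_mul] using h1')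
    have h0 : ∀ a' ∈ σ.ap R, a' * (a - e * a) = 0 := by
      intro a' ha'
      rw [mul_sub, ← mul_assoc, hae a' ha', sub_self]
    have := KL _ hb h0
    have := sub_eq_zero.mp this
    exact this.symm
  -- `I` is a right ideal
  have hIr : ∀ a ∈ σ.ap R, ∀ r : R, a * r ∈ σ.ap R := by
    intro a ha r
    have hmap := σ.map_le (M := RMod.of R R) (N := RMod.of R R)
      (LinearMap.toSpanSingleton R R r)
    have h1' := hmap (Submodule.mem_map_of_mem ha)
    simpa [LinearMap.toSpanSingleton_apply, smul_eq_mul] using h1'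
  -- `e` is central
  have hcomm : ∀ r : R, e * r = r * e := by
    intro r
    have hre : r * e ∈ σ.ap R := by
      simpa [smul_eq_mul] using Submodule.smul_mem (σ.ap R) r heI
    have hc : k * (r * e) ∈ σ.ap R := by
      simpa [smul_eq_mul] using Submodule.smul_mem (σ.ap R) k hre
    have hc0 : k * (r * e) = 0 := by
      apply KL _ hc
      intro a ha
      rw [← mul_assoc, IK0 a ha k hkK, zero_mul]
    have herk : (e * r) * k = 0 := IK0 _ (hIr e heI r) k hkK
    have h2' : r * e = e * r * e := by
      calc r * e = (e + k) * (r * e) := by rw [hek, one_mul]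
      _ = e * (r * e) + k * (r * e) := by rw [add_mul]
      _ = e * r * e := by rw [hc0, add_zero, mul_assoc]
    have h1' : e * r = e * r * e := by
      calc e * r = (e * r) * (e + k) := by rw [hek, mul_one]
      _ = e * r * e + e * r * k := by rw [mul_add]
      _ = e * r * e := by rw [herk, add_zero]
    rw [h1', h2']
  have hee : e * e = e := hae e heI
  -- membership criterion for σ
  have memσ : ∀ (X : RMod R) (m : (X : Type u)), m ∈ σ.app X ↔ e • m = m := by
    intro X m
    constructor
    · intro hm
      obtain ⟨a, haI, ham⟩ := W X m hm
      calc e • m = e • (a • m) := by rw [ham]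
      _ = (e * a) • m := (mul_smul e a m).symm
      _ = a • m := by rw [hea a haI]
      _ = m := ham
    · intro hm
      have hmap := σ.map_le (M := RMod.of R R) (N := X)
        (LinearMap.toSpanSingleton R (X : Type u) m)
      have h1' := hmap (Submodule.mem_map_of_mem heI)
      rw [LinearMap.toSpanSingleton_apply] at h1'
      rwa [hm] at h1'
  -- membership criterion for σ'
  have memσ' : ∀ (X : RMod R) (m : (X : Type u)), m ∈ σ'.app X ↔ e • m = 0 := by
    intro X m
    have hmem : m ∈ σ'.app X ↔ ∀ a ∈ σ.ap R, a • m = 0 := by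
      constructor
      · intro h
        have h' : m ∈ (σ'.app X : Set (X : Type u)) := h
        rw [hσ' X] at h'
        exact h'
      · intro h
        have h' : m ∈ {m : (X : Type u) | ∀ a ∈ σ.ap R, a • m = 0} := h
        rw [← hσ' X] at h'
        exact h'
    rw [hmem]
    constructor
    · intro h; exact h e heI
    · intro h a ha
      rw [← hae a ha, mul_smul, h, smul_zero]
  -- the key one-directional statement
  have key : ∀ M N : RMod R,
      (∃ f : (N : Type u) →ₗ[R] (M : Type u), f ≠ 0) →
      (∃ g : (M : Type u) →ₗ[R] (N : Type u), g ≠ 0) := by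
    rintro M N ⟨f, hf⟩
    obtain ⟨n, hn⟩ : ∃ n, f n ≠ 0 := by
      by_contra h; push_neg at h; exact hf (LinearMap.ext h)
    have hx1 : e • n ∈ σ.app N := (memσ N (e • n)).mpr (by rw [← mul_smul, hee])
    have hx2 : n - e • n ∈ σ'.app N := (memσ' N _).mpr (by
      rw [smul_sub, ← mul_smul, hee, sub_self])
    have hsum : f (e • n) + f (n - e • n) = f n := by
      rw [← map_add]
      congr 1
      abel
    by_cases hcase : f (e • n) = 0
    · -- the σ'-part of `f` is nonzero
      have hfx : f (n - e • n) ≠ 0 := by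
        intro h0
        rw [hcase, h0, add_zero] at hsum
        exact hn hsum.symm
      have hex0 : e • (n - e • n) = 0 := by rw [smul_sub, ← mul_smul, hee, sub_self]
      have hfxσ' : f (n - e • n) ∈ σ'.app M := (memσ' M _).mpr (by
        rw [← map_smul, hex0, map_zero])
      have hNbot : σ'.app N ≠ ⊥ := by
        intro hb
        rw [hb] at hx2
        have := Submodule.mem_bot _ |>.mp hx2
        exact hfx (by rw [this, map_zero])
      have hMbot : σ'.app M ≠ ⊥ := by
        intro hb
        rw [hb] at hfxσ'
        exact hfx (Submodule.mem_bot _ |>.mp hfxσ')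
      have hwit : ∃ g0 : ↥(σ'.app N) →ₗ[R] (M : Type u), g0 ≠ 0 := by
        refine ⟨f.comp (σ'.app N).subtype, ?_⟩
        intro h0
        exact hfx (by simpa using LinearMap.congr_fun h0 ⟨n - e • n, hx2⟩)
      obtain ⟨h, hhne⟩ := (h2 M N hMbot hNbot).mp hwit
      obtain ⟨m0, hm0⟩ : ∃ m0, h m0 ≠ 0 := by
        by_contra hh; push_neg at hh; exact hhne (LinearMap.ext hh)
      refine ⟨(σ'.app N).subtype.comp h, ?_⟩
      intro h0
      have := LinearMap.congr_fun h0 m0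
      simp only [LinearMap.comp_apply, Submodule.coe_subtype, LinearMap.zero_apply] at this
      exact hm0 (Submodule.coe_eq_zero.mp this)
    · -- the σ-part of `f` is nonzero
      have hfx : f (e • n) ≠ 0 := hcase
      have hfxσ : f (e • n) ∈ σ.app M := (memσ M _).mpr (by
        rw [← map_smul, ← mul_smul, hee])
      have hNbot : σ.app N ≠ ⊥ := by
        intro hb
        rw [hb] at hx1
        have := Submodule.mem_bot _ |>.mp hx1
        exact hfx (by rw [this, map_zero])
      have hMbot : σ.app M ≠ ⊥ := by
        intro hb
        rw [hb] at hfxσ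
        exact hfx (Submodule.mem_bot _ |>.mp hfxσ)
      have hwit : ∃ g0 : ↥(σ.app N) →ₗ[R] (M : Type u), g0 ≠ 0 := by
        refine ⟨f.comp (σ.app N).subtype, ?_⟩
        intro h0
        exact hfx (by simpa using LinearMap.congr_fun h0 ⟨e • n, hx1⟩)
      obtain ⟨h, hhne⟩ := (h1 M N hMbot hNbot).mp hwit
      obtain ⟨m0, hm0⟩ : ∃ m0, h m0 ≠ 0 := by
        by_contra hh; push_neg at hh; exact hhne (LinearMap.ext hh)
      refine ⟨(σ.app N).subtype.comp h, ?_⟩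
      intro h0
      have := LinearMap.congr_fun h0 m0
      simp only [LinearMap.comp_apply, Submodule.coe_subtype, LinearMap.zero_apply] at this
      exact hm0 (Submodule.coe_eq_zero.mp this)
  intro M N
  exact ⟨key M N, key N M⟩
end

section
/- Let σ be an exact and costable preradical on R-Mod, suppose R satisfies (σ-HH), let C be a σ-torsion class and let M be an R-module. If M has a quotient L with L ∈ C and σ(L) ≠ 0, then M has a nonzero submodule N with N ∈ C and σ(N) = N. Moreover, there exists a largest submodule K of M with K ∈ C and σ(K) = K (namely, K contains every submodule of M lying in C ∩ T_σ). -/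
/-! Basic framework: bundled left `R`-modules (in the same universe as `R`),
preradicals on `R`-Mod, and the notions from the paper
"On σ-classes of modules with applications". -/

universe u

section Aux

variable {R : Type u} [Ring R]

lemma aux_top_ne_bot {X : Type u} [AddCommGroup X] [Module R X] [Nontrivial X] :
    (⊤ : Submodule R X) ≠ ⊥ := by
  intro h
  obtain ⟨x, hx⟩ := exists_ne (0 : X)
  exact hx ((Submodule.mem_bot R).mp (h ▸ Submodule.mem_top))

lemma aux_ap_top_of_surjective (σ : Preradical R) {X Y : Type u}
    [AddCommGroup X] [Module R X] [AddCommGroup Y] [Module R Y]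
    (g : X →ₗ[R] Y) (hg : Function.Surjective g) (hX : σ.ap X = ⊤) :
    σ.ap Y = ⊤ := by
  have h := σ.map_le (M := RMod.of R X) (N := RMod.of R Y) g
  rw [show σ.app (RMod.of R X) = σ.ap X from rfl, hX, Submodule.map_top,
    LinearMap.range_eq_top.mpr hg] at h
  exact top_le_iff.mp h

lemma aux_ap_self_top (σ : Preradical R) (hle : σ.LeftExact) (M : RMod R) :
    σ.ap ↥(σ.app M) = ⊤ := by
  have h := hle M (σ.app M)
  rw [inf_idem] at h
  have h2 : ((⊤ : Submodule R ↥(σ.app M)).map (σ.app M).subtype) = σ.app M := by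
    rw [Submodule.map_top, Submodule.range_subtype]
  exact Submodule.map_injective_of_injective (σ.app M).injective_subtype (h.trans h2.symm)

lemma aux_class_transfer (σ : Preradical R) (C : RMod R → Prop) (hC : RespectsIso R C)
    (hT : σ.SigmaTorsionClass C) {X Y : Type u} [AddCommGroup X] [Module R X]
    [AddCommGroup Y] [Module R Y] (g : X →ₗ[R] Y) (hg : Function.Surjective g)
    (hCX : C (RMod.of R X)) (hY : σ.ap Y = ⊤) : C (RMod.of R Y) := by
  have h := hT.1.2 (RMod.of R X) (RMod.of R Y) g hg hCX
  have hY' : σ.app (RMod.of R Y) = ⊤ := hY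
  rw [hY'] at h
  exact hC _ _ ⟨Submodule.topEquiv⟩ h

end Aux

/-- For `σ` exact and costable with `R` satisfying `(σ-HH)`, `C` a
σ-torsion class and `M` a module: if `M` has a quotient `L ∈ C` with `σ(L) ≠ 0`, then
`M` has a nonzero submodule `N ∈ C` with `σ(N) = N`; moreover there is a largest
submodule `K ≤ M` with `K ∈ C` and `σ(K) = K`. -/
theorem exists_torsion_submodule_and_largest {R : Type u} [Ring R] (σ : Preradical R)
    (hle : σ.LeftExact) (hco : σ.Cohereditary) (hcost : σ.Costable) (hHH : σ.HH)
    (C : RMod R → Prop) (hC : RespectsIso R C) (hT : σ.SigmaTorsionClass C)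
    (M : RMod R)
    (h : ∃ L : RMod R, (∃ f : (M : Type u) →ₗ[R] (L : Type u), Function.Surjective f) ∧
      C L ∧ σ.app L ≠ ⊥) :
    (∃ N : Submodule R (M : Type u), N ≠ ⊥ ∧ C (RMod.of R ↥N) ∧ σ.ap ↥N = ⊤) ∧
    ∃ K : Submodule R (M : Type u), C (RMod.of R ↥K) ∧ σ.ap ↥K = ⊤ ∧
      ∀ N : Submodule R (M : Type u), C (RMod.of R ↥N) → σ.ap ↥N = ⊤ → N ≤ K := by
  classical
  constructor
  · -- Part 1
    obtain ⟨L, ⟨f, hf⟩, hCL, hσL⟩ := h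
    have hmap : (σ.app M).map f = σ.app L := hco M L f hf
    have hσM : σ.app M ≠ ⊥ := by
      intro hbot; rw [hbot, Submodule.map_bot] at hmap; exact hσL hmap.symm
    have hAtop : σ.ap ↥(σ.app M) = ⊤ := aux_ap_self_top σ hle M
    have hBtop : σ.ap ↥(σ.app L) = ⊤ := aux_ap_self_top σ hle L
    have hMnt : Nontrivial ↥(σ.app M) := Submodule.nontrivial_iff_ne_bot.mpr hσM
    have hLnt : Nontrivial ↥(σ.app L) := Submodule.nontrivial_iff_ne_bot.mpr hσL
    have hres : ∀ x ∈ σ.app M, f x ∈ σ.app L := fun x hx =>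
      hmap ▸ Submodule.mem_map_of_mem hx
    let fres : ↥(σ.app M) →ₗ[R] ↥(σ.app L) := f.restrict hres
    have hfres_surj : Function.Surjective fres := by
      rintro ⟨y, hy⟩
      rw [← hmap] at hy
      obtain ⟨x, hx, rfl⟩ := hy
      exact ⟨⟨x, hx⟩, rfl⟩
    have hfres_ne : fres ≠ 0 := by
      intro h0
      obtain ⟨y, hy⟩ := exists_ne (0 : ↥(σ.app L))
      obtain ⟨x, hx⟩ := hfres_surj y
      rw [h0] at hx
      exact hy hx.symm
    have hA' : σ.app (RMod.of R ↥(σ.app M)) ≠ ⊥ := by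
      have h1 : σ.app (RMod.of R ↥(σ.app M)) = ⊤ := hAtop
      rw [h1]
      exact aux_top_ne_bot
    obtain ⟨g, hg⟩ := (hHH (RMod.of R ↥(σ.app M)) L hA' hσL).mpr ⟨fres, hfres_ne⟩
    let g' : ↥(σ.app L) →ₗ[R] (M : Type u) := (σ.app M).subtype ∘ₗ g
    have hg' : g' ≠ 0 := by
      intro h0
      apply hg
      ext x
      have hx : g' x = 0 := by rw [h0]; rfl
      exact hx
    refine ⟨LinearMap.range g', fun hb => hg' (LinearMap.range_eq_bot.mp hb), ?_, ?_⟩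
    · have hCB : C (RMod.of R ↥(σ.app L)) :=
        hT.1.2 L L LinearMap.id Function.surjective_id hCL
      exact aux_class_transfer σ C hC hT g'.rangeRestrict
        (LinearMap.surjective_rangeRestrict g') hCB
        (aux_ap_top_of_surjective σ g'.rangeRestrict
          (LinearMap.surjective_rangeRestrict g') hBtop)
    · exact aux_ap_top_of_surjective σ g'.rangeRestrict
        (LinearMap.surjective_rangeRestrict g') hBtop
  · -- Part 2
    let ι : Type u := {N : Submodule R (M : Type u) // C (RMod.of R ↥N) ∧ σ.ap ↥N = ⊤}
    let K : Submodule R (M : Type u) := ⨆ i : ι, i.1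
    let D : Type u := DirectSum ι fun i => ↥(i.1)
    let F : D →ₗ[R] (M : Type u) := DirectSum.toModule R ι _ fun i => (i.1).subtype
    have hFlof : ∀ (i : ι) (x : ↥(i.1)), F (DirectSum.lof R ι (fun i => ↥(i.1)) i x) = x := by
      intro i x
      show DirectSum.toModule R ι (M : Type u) (fun i => (i.1).subtype)
        (DirectSum.lof R ι (fun i => ↥(i.1)) i x) = ((i.1).subtype x : (M : Type u))
      exact DirectSum.toModule_lof (R := R) (φ := fun i : ι => (i.1).subtype) i x
    have hFmem : ∀ d : D, F d ∈ K := by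
      intro d
      induction d using DirectSum.induction_on with
      | zero => simp
      | of i x =>
        rw [show (DirectSum.of (fun i : ι => ↥(i.1)) i x) =
          DirectSum.lof R ι (fun i => ↥(i.1)) i x from rfl, hFlof]
        exact le_iSup (fun i : ι => i.1) i x.2
      | add a b ha hb => rw [map_add]; exact K.add_mem ha hb
    let F' : D →ₗ[R] ↥K := F.codRestrict K hFmem
    have hF'surj : Function.Surjective F' := by
      rintro ⟨y, hy⟩
      have hle' : K ≤ LinearMap.range F := by
        apply iSup_le
        intro i x hx
        exact ⟨DirectSum.lof R ι (fun i => ↥(i.1)) i ⟨x, hx⟩, hFlof i ⟨x, hx⟩⟩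
      obtain ⟨d, hd⟩ := hle' hy
      exact ⟨d, Subtype.ext hd⟩
    have hDtop : σ.ap D = ⊤ := by
      rw [Submodule.eq_top_iff']
      intro d
      induction d using DirectSum.induction_on with
      | zero => exact (σ.ap D).zero_mem
      | of i x =>
        have hmem : x ∈ σ.ap ↥(i.1) := by rw [i.2.2]; trivial
        have hml := σ.map_le (M := RMod.of R ↥(i.1)) (N := RMod.of R D)
          (DirectSum.lof R ι (fun i => ↥(i.1)) i)
        exact hml (Submodule.mem_map_of_mem hmem)
      | add a b ha hb => exact (σ.ap D).add_mem ha hb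
    have hCD : C (RMod.of R D) := hT.2.1 ι (fun i => RMod.of R ↥(i.1)) (fun i => i.2.1)
    have hKtop : σ.ap ↥K = ⊤ := aux_ap_top_of_surjective σ F' hF'surj hDtop
    have hCK : C (RMod.of R ↥K) := aux_class_transfer σ C hC hT F' hF'surj hCD hKtop
    exact ⟨K, hCK, hKtop, fun N hCN hNtop => le_iSup (fun i : ι => i.1) ⟨N, hCN, hNtop⟩⟩
end

section
/- Let σ be an exact and costable preradical on R-Mod. If R satisfies (σ-HH), then for every class C of R-modules closed under isomorphism the following are equivalent: C is a σ-torsion class; C satisfies (σ-CN); C is a hereditary σ-torsion class. In particular the σ-torsion classes, the classes satisfying (σ-CN) (the σ-conatural classes), and the hereditary σ-torsion classes all coincide. -/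
/-! Basic framework: bundled left `R`-modules (in the same universe as `R`),
preradicals on `R`-Mod, and the notions from the paper
"On σ-classes of modules with applications". -/

universe u

/-! ### Auxiliary development for the proof -/

namespace SigmaHHProof

open Function

variable {R : Type u} [Ring R]

/-- small helper: composing a nonzero map with an equivalence on the right keeps it nonzero. -/
lemma comp_equiv_ne_zero {A B C' : Type u} [AddCommGroup A] [Module R A]
    [AddCommGroup B] [Module R B] [AddCommGroup C'] [Module R C']
    (f : A →ₗ[R] B) (g : C' ≃ₗ[R] A) (hf : f ≠ 0) :
    f ∘ₗ (g : C' →ₗ[R] A) ≠ 0 := by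
  intro hz
  apply hf
  ext a
  have := congrArg (fun φ => φ (g.symm a)) hz
  simpa using this

/-- small helper: composing a nonzero map with an equivalence on the left keeps it nonzero. -/
lemma equiv_comp_ne_zero {A B C' : Type u} [AddCommGroup A] [Module R A]
    [AddCommGroup B] [Module R B] [AddCommGroup C'] [Module R C']
    (f : A →ₗ[R] B) (g : B ≃ₗ[R] C') (hf : f ≠ 0) :
    (g : B →ₗ[R] C') ∘ₗ f ≠ 0 := by
  intro hz
  apply hf
  ext a
  have : g (f a) = 0 := by simpa using congrArg (fun φ => φ a) hz
  simpa using g.map_eq_zero_iff.mp this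

/-- A central idempotent implementing the preradical `σ`. -/
structure Central (σ : Preradical R) : Type u where
  e : R
  comm : ∀ r : R, r * e = e * r
  idem : e * e = e
  mem_iff : ∀ (M : RMod R) (x : (M : Type u)), x ∈ σ.app M ↔ e • x = x

namespace Central

variable {σ : Preradical R} (hc : Central σ)

set_option linter.unusedSectionVars false

include hc

lemma smul_mem (M : RMod R) (x : (M : Type u)) : hc.e • x ∈ σ.app M :=
  (hc.mem_iff M _).2 (by rw [smul_smul, hc.idem])

lemma smul_eq_of_mem {M : RMod R} {x : (M : Type u)} (hx : x ∈ σ.app M) : hc.e • x = x :=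
  (hc.mem_iff M x).1 hx

lemma app_eq_bot_iff (M : RMod R) :
    σ.app M = ⊥ ↔ ∀ x : (M : Type u), hc.e • x = 0 := by
  constructor
  · intro hb x
    have := hc.smul_mem M x
    rw [hb] at this
    simpa using this
  · intro hx
    rw [eq_bot_iff]
    intro x hxm
    have h1 := hc.smul_eq_of_mem hxm
    rw [hx x] at h1
    simp [← h1]

lemma app_ne_bot_iff (M : RMod R) :
    σ.app M ≠ ⊥ ↔ ∃ x : (M : Type u), hc.e • x ≠ 0 := by
  rw [Ne, hc.app_eq_bot_iff M, not_forall]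

lemma app_eq_top (M : RMod R) (hM : ∀ x : (M : Type u), hc.e • x = x) : σ.app M = ⊤ := by
  rw [eq_top_iff]
  intro x _
  exact (hc.mem_iff M x).2 (hM x)

lemma app_ne_bot (M : RMod R) (hM : ∀ x : (M : Type u), hc.e • x = x)
    (hnt : ∃ x : (M : Type u), x ≠ 0) : σ.app M ≠ ⊥ := by
  obtain ⟨x, hx⟩ := hnt
  exact (hc.app_ne_bot_iff M).2 ⟨x, by rw [hM x]; exact hx⟩

/-- the linear map `x ↦ e • x` (linear since `e` is central). -/
def eMap (M : RMod R) : (M : Type u) →ₗ[R] (M : Type u) where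
  toFun x := hc.e • x
  map_add' x y := smul_add _ x y
  map_smul' r x := by
    show hc.e • (r • x) = r • (hc.e • x)
    rw [smul_smul, smul_smul, hc.comm r]

lemma exists_proj (M : RMod R) :
    ∃ p : (M : Type u) →ₗ[R] ↥(σ.app M), Surjective p := by
  refine ⟨(hc.eMap M).codRestrict (σ.app M) (hc.smul_mem M), ?_⟩
  rintro ⟨y, hy⟩
  exact ⟨y, Subtype.ext (hc.smul_eq_of_mem hy)⟩

lemma subtype_tor {M : RMod R} (hM : ∀ x : (M : Type u), hc.e • x = x)
    (N : Submodule R (M : Type u)) : ∀ x : ↥N, hc.e • x = x := fun x =>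
  Subtype.ext (by rw [Submodule.coe_smul]; exact hM x.1)

lemma sigma_tor (M : RMod R) : ∀ x : ↥(σ.app M), hc.e • x = x := fun x =>
  Subtype.ext (by rw [Submodule.coe_smul]; exact hc.smul_eq_of_mem x.2)

lemma quot_tor {M : RMod R} (hM : ∀ x : (M : Type u), hc.e • x = x)
    (N : Submodule R (M : Type u)) :
    ∀ x : (M : Type u) ⧸ N, hc.e • x = x := by
  intro x
  obtain ⟨y, rfl⟩ := Submodule.Quotient.mk_surjective N x
  rw [← Submodule.Quotient.mk_smul, hM y]

lemma app_quot_sigma_eq_bot (M : RMod R) :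
    σ.app (RMod.of R ((M : Type u) ⧸ σ.app M)) = ⊥ := by
  rw [hc.app_eq_bot_iff]
  intro x
  obtain ⟨y, rfl⟩ := Submodule.Quotient.mk_surjective _ x
  rw [← Submodule.Quotient.mk_smul, Submodule.Quotient.mk_eq_zero]
  exact hc.smul_mem M y

lemma surj_bot {M L : RMod R} (f : (M : Type u) →ₗ[R] (L : Type u)) (hf : Surjective f)
    (hM : σ.app M = ⊥) : σ.app L = ⊥ := by
  rw [hc.app_eq_bot_iff] at hM ⊢
  intro x
  obtain ⟨y, rfl⟩ := hf x
  rw [← map_smul, hM y, map_zero]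

/-- The (σ-HH) condition, in the convenient "symmetry against torsion modules" form. -/
lemma sym (hHH : σ.HH) (M T : RMod R) (hM : σ.app M ≠ ⊥)
    (hT : ∀ x : (T : Type u), hc.e • x = x) (hTnt : ∃ x : (T : Type u), x ≠ 0) :
    (∃ f : (T : Type u) →ₗ[R] (M : Type u), f ≠ 0) ↔
      (∃ f : (M : Type u) →ₗ[R] (T : Type u), f ≠ 0) := by
  have htop := hc.app_eq_top T hT
  have hTne : σ.app T ≠ ⊥ := hc.app_ne_bot T hT hTnt
  have key := hHH M T hM hTne
  have eqv : (↥(σ.app T)) ≃ₗ[R] (T : Type u) :=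
    (LinearEquiv.ofEq _ _ htop).trans Submodule.topEquiv
  constructor
  · rintro ⟨f, hf⟩
    obtain ⟨g, hg⟩ := key.mp ⟨f ∘ₗ (eqv : ↥(σ.app T) →ₗ[R] (T : Type u)),
      comp_equiv_ne_zero f eqv hf⟩
    exact ⟨(eqv : ↥(σ.app T) →ₗ[R] (T : Type u)) ∘ₗ g, equiv_comp_ne_zero g eqv hg⟩
  · rintro ⟨g, hg⟩
    obtain ⟨f, hf⟩ := key.mpr ⟨(eqv.symm : (T : Type u) →ₗ[R] ↥(σ.app T)) ∘ₗ g,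
      equiv_comp_ne_zero g eqv.symm hg⟩
    exact ⟨f ∘ₗ (eqv.symm : (T : Type u) →ₗ[R] ↥(σ.app T)), comp_equiv_ne_zero f eqv.symm hf⟩

/-- Key consequence of (σ-HH): every nonzero torsion module admits a simple torsion
module both as a quotient and as a submodule. -/
lemma exists_simple (hHH : σ.HH) (A : RMod R) (hA : ∀ x : (A : Type u), hc.e • x = x)
    (hnt : ∃ a : (A : Type u), a ≠ 0) :
    ∃ T : RMod R, IsSimpleModule R (T : Type u) ∧ (∀ x : (T : Type u), hc.e • x = x) ∧
      (∃ s : (A : Type u) →ₗ[R] (T : Type u), Surjective s) ∧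
      (∃ j : (T : Type u) →ₗ[R] (A : Type u), Injective j) := by
  obtain ⟨a, ha⟩ := hnt
  set χ : R →ₗ[R] (A : Type u) := LinearMap.toSpanSingleton R (A : Type u) a with hχ
  have hker : (LinearMap.ker χ : Ideal R) ≠ ⊤ := by
    intro hk
    apply ha
    have h1 : (1 : R) ∈ LinearMap.ker χ := by rw [hk]; trivial
    simpa [hχ, LinearMap.mem_ker] using h1
  obtain ⟨I, hImax, hkerI⟩ := Ideal.exists_le_maximal _ hker
  have hsimple : IsSimpleModule R (R ⧸ (I : Submodule R R)) :=
    isSimpleModule_iff_isCoatom.mpr (Ideal.isMaximal_def.mp hImax)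
  haveI := hsimple
  haveI := IsSimpleModule.nontrivial R (R ⧸ (I : Submodule R R))
  set T : RMod R := RMod.of R (R ⧸ (I : Submodule R R)) with hT
  have h1e : (1 : R) - hc.e ∈ (I : Submodule R R) := by
    apply hkerI
    rw [LinearMap.mem_ker, map_sub]
    have hχ1 : χ 1 = a := by simp [hχ]
    have hχe : χ hc.e = a := by
      rw [hχ, LinearMap.toSpanSingleton_apply]
      exact hA a
    rw [hχ1, hχe, sub_self]
  have hTtor : ∀ x : (T : Type u), hc.e • x = x := by
    intro x
    obtain ⟨r, rfl⟩ := Submodule.Quotient.mk_surjective _ x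
    rw [← Submodule.Quotient.mk_smul, Submodule.Quotient.eq]
    have hmem : r * ((1 : R) - hc.e) ∈ (I : Submodule R R) := by
      simpa [smul_eq_mul] using (I : Submodule R R).smul_mem r h1e
    have hrw : hc.e • r - r = -(r * ((1 : R) - hc.e)) := by
      rw [smul_eq_mul, mul_sub, mul_one, hc.comm r, neg_sub]
    rw [hrw]
    exact neg_mem hmem
  have hTnt : ∃ x : (T : Type u), x ≠ 0 := exists_ne 0
  set Csub : Submodule R (A : Type u) := LinearMap.range χ with hCsub
  have haC : a ∈ Csub := ⟨1, by simp [hχ]⟩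
  set q : (R ⧸ LinearMap.ker χ) →ₗ[R] (T : Type u) :=
    Submodule.mapQ (LinearMap.ker χ) (I : Submodule R R) LinearMap.id
      (by simpa using hkerI) with hq
  have hqsurj : Surjective q := by
    intro t
    obtain ⟨r, rfl⟩ := Submodule.Quotient.mk_surjective _ t
    exact ⟨Submodule.Quotient.mk r, by simp [hq, Submodule.mapQ_apply]; rfl⟩
  set c0 : ↥Csub →ₗ[R] (T : Type u) :=
    q ∘ₗ (LinearMap.quotKerEquivRange χ).symm.toLinearMap with hc0
  have hc0surj : Surjective c0 := by
    rw [hc0]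
    simp only [LinearMap.coe_comp]
    exact hqsurj.comp (LinearEquiv.surjective _)
  have hc0ne : c0 ≠ 0 := by
    intro hz
    obtain ⟨t, ht⟩ := hTnt
    obtain ⟨x, rfl⟩ := hc0surj t
    exact ht (by rw [hz]; rfl)
  have hCtor : ∀ x : ↥Csub, hc.e • x = x := hc.subtype_tor hA Csub
  have hCnt : ∃ x : ↥Csub, x ≠ 0 := ⟨⟨a, haC⟩, by simpa [Subtype.ext_iff] using ha⟩
  have hCσ : σ.app (RMod.of R ↥Csub) ≠ ⊥ := hc.app_ne_bot _ hCtor hCnt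
  obtain ⟨j₀, hj₀⟩ := (hc.sym hHH (RMod.of R ↥Csub) T hCσ hTtor hTnt).mpr ⟨c0, hc0ne⟩
  have hj₀inj : Injective j₀ := LinearMap.injective_of_ne_zero hj₀
  set j : (T : Type u) →ₗ[R] (A : Type u) := Csub.subtype ∘ₗ j₀ with hj
  have hjinj : Injective j := by
    rw [hj]
    simp only [LinearMap.coe_comp]
    exact Csub.injective_subtype.comp hj₀inj
  have hjne : j ≠ 0 := by
    obtain ⟨t, ht⟩ := hTnt
    intro hz
    exact ht (hjinj (by rw [hz]; simp))
  have hAσ : σ.app A ≠ ⊥ := hc.app_ne_bot A hA ⟨a, ha⟩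
  obtain ⟨s, hs⟩ := (hc.sym hHH A T hAσ hTtor hTnt).mp ⟨j, hjne⟩
  have hssurj : Surjective s := LinearMap.surjective_of_ne_zero hs
  exact ⟨T, hsimple, hTtor, ⟨s, hssurj⟩, ⟨j, hjinj⟩⟩

/-! ### Torsion classes -/

section Classes

variable {C : RMod R → Prop}

lemma iso_mem (hiso : RespectsIso R C) {X Y : Type u}
    [AddCommGroup X] [Module R X] [AddCommGroup Y] [Module R Y]
    (eqv : X ≃ₗ[R] Y) (hX : C (RMod.of R X)) : C (RMod.of R Y) :=
  hiso _ _ ⟨eqv⟩ hX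

lemma tors_quot (hiso : RespectsIso R C) (hT : σ.SigmaTorsionClass C) {M L : RMod R}
    (f : (M : Type u) →ₗ[R] (L : Type u)) (hf : Surjective f) (hM : C M)
    (hL : ∀ x : (L : Type u), hc.e • x = x) : C L := by
  have h1 := hT.1.2 M L f hf hM
  have htop := hc.app_eq_top L hL
  exact hiso (RMod.of R ↥(σ.app L)) L
    ⟨(LinearEquiv.ofEq _ _ htop).trans Submodule.topEquiv⟩ h1

lemma mem_of_sigma_mem (hT : σ.SigmaTorsionClass C) (M : RMod R)
    (hs : C (RMod.of R ↥(σ.app M))) : C M :=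
  hT.2.2 M (σ.app M) hs (hT.1.1 _ (hc.app_quot_sigma_eq_bot M))

/-- Core of "torsion classes are conatural": a torsion module all of whose
simple torsion quotients lie in a σ-torsion class `C` lies in `C`. -/
lemma tors_mem (hiso : RespectsIso R C) (hHH : σ.HH) (hT : σ.SigmaTorsionClass C)
    (A : RMod R) (hAtor : ∀ x : (A : Type u), hc.e • x = x)
    (hQ : ∀ T' : RMod R, IsSimpleModule R (T' : Type u) →
      (∀ x : (T' : Type u), hc.e • x = x) →
      (∃ f : (A : Type u) →ₗ[R] (T' : Type u), Surjective f) → C T') :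
    C A := by
  classical
  set 𝒮 : Set (Submodule R (A : Type u)) := {N | C (RMod.of R ↥N)} with h𝒮
  set t : Submodule R (A : Type u) := ⨆ N : 𝒮, (N : Submodule R (A : Type u)) with ht
  have htC : C (RMod.of R ↥t) := by
    have hsum := hT.2.1 𝒮 (fun N => RMod.of R ↥(N : Submodule R (A : Type u)))
      (fun N => N.2)
    set Φ : DirectSum 𝒮 (fun N => ↥(N : Submodule R (A : Type u))) →ₗ[R] (A : Type u) :=
      DirectSum.coeLinearMap (fun N : 𝒮 => (N : Submodule R (A : Type u))) with hΦ
    have hrange : LinearMap.range Φ = t := DirectSum.range_coeLinearMap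
    set Φ' : DirectSum 𝒮 (fun N => ↥(N : Submodule R (A : Type u))) →ₗ[R] ↥t :=
      (LinearEquiv.ofEq _ _ hrange : ↥(LinearMap.range Φ) ≃ₗ[R] ↥t).toLinearMap ∘ₗ
        Φ.rangeRestrict with hΦ'
    have hΦ's : Surjective Φ' := by
      rw [hΦ']
      simp only [LinearMap.coe_comp]
      exact (LinearEquiv.surjective _).comp Φ.surjective_rangeRestrict
    exact hc.tors_quot hiso hT Φ' hΦ's hsum (hc.subtype_tor hAtor t)
  by_cases hteq : t = ⊤
  · exact hiso (RMod.of R ↥t) A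
      ⟨(LinearEquiv.ofEq _ _ hteq).trans Submodule.topEquiv⟩ htC
  · exfalso
    obtain ⟨x0, hx0⟩ : ∃ x : (A : Type u), x ∉ t := by
      by_contra hall
      push_neg at hall
      exact hteq (Submodule.eq_top_iff'.mpr hall)
    set Q : RMod R := RMod.of R ((A : Type u) ⧸ t) with hQdef
    have hQtor : ∀ x : (Q : Type u), hc.e • x = x := hc.quot_tor hAtor t
    have hQnt : ∃ x : (Q : Type u), x ≠ 0 :=
      ⟨Submodule.Quotient.mk x0, by rwa [Ne, Submodule.Quotient.mk_eq_zero]⟩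
    obtain ⟨T, hsimple, hTtor, ⟨s, hssurj⟩, ⟨jq, hjq⟩⟩ := hc.exists_simple hHH Q hQtor hQnt
    haveI := hsimple
    haveI := IsSimpleModule.nontrivial R (T : Type u)
    -- T belongs to C by the hypothesis hQ
    have hTC : C T := by
      refine hQ T hsimple hTtor ⟨s ∘ₗ t.mkQ, ?_⟩
      simp only [LinearMap.coe_comp]
      exact hssurj.comp t.mkQ_surjective
    -- build the submodule V with V/t ≅ T
    set S' : Submodule R ((A : Type u) ⧸ t) := LinearMap.range jq with hS'
    set V : Submodule R (A : Type u) := Submodule.comap t.mkQ S' with hV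
    have htV : t ≤ V := by
      intro y hy
      show t.mkQ y ∈ S'
      have : t.mkQ y = 0 := by
        rw [Submodule.mkQ_apply]
        exact (Submodule.Quotient.mk_eq_zero t).mpr hy
      rw [this]
      exact zero_mem _
    set φ : ↥V →ₗ[R] ((A : Type u) ⧸ t) := t.mkQ ∘ₗ V.subtype with hφ
    have hφrange : LinearMap.range φ = S' := by
      rw [hφ, LinearMap.range_comp, Submodule.range_subtype, hV]
      exact Submodule.map_comap_eq_of_surjective t.mkQ_surjective S'
    have hφker : LinearMap.ker φ = Submodule.comap V.subtype t := by
      rw [hφ, LinearMap.ker_comp, Submodule.ker_mkQ]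
    have hkerC : C (RMod.of R ↥(LinearMap.ker φ)) := by
      refine hiso (RMod.of R ↥t) _ ⟨?_⟩ htC
      exact (Submodule.comapSubtypeEquivOfLe htV).symm.trans
        (LinearEquiv.ofEq _ _ hφker.symm)
    have hquotC : C (RMod.of R (↥V ⧸ LinearMap.ker φ)) := by
      refine hiso T _ ⟨?_⟩ hTC
      exact (LinearEquiv.ofInjective jq hjq).trans
        (((LinearEquiv.ofEq _ _ hφrange.symm)).trans φ.quotKerEquivRange.symm)
    have hVC : C (RMod.of R ↥V) := hT.2.2 (RMod.of R ↥V) (LinearMap.ker φ) hkerC hquotC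
    have hVt : V ≤ t :=
      le_iSup (fun N : 𝒮 => (N : Submodule R (A : Type u))) (⟨V, hVC⟩ : 𝒮)
    obtain ⟨t0, ht0⟩ := exists_ne (0 : (T : Type u))
    have hjqt0 : jq t0 ≠ 0 := fun hz => ht0 (hjq (by rw [hz, map_zero]))
    obtain ⟨y, hy⟩ := t.mkQ_surjective (jq t0)
    have hyV : y ∈ V := by
      show t.mkQ y ∈ S'
      rw [hy]
      exact ⟨t0, rfl⟩
    have hyt : y ∈ t := hVt hyV
    apply hjqt0
    rw [← hy, Submodule.mkQ_apply]
    exact (Submodule.Quotient.mk_eq_zero t).mpr hyt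

/-- Every σ-torsion class satisfies (σ-CN). -/
lemma tors_to_cn (hiso : RespectsIso R C) (hHH : σ.HH)
    (hT : σ.SigmaTorsionClass C) : σ.SigmaCN C := by
  intro M hM
  apply hc.mem_of_sigma_mem hT
  refine hc.tors_mem hiso hHH hT (RMod.of R ↥(σ.app M)) (hc.sigma_tor M) ?_
  intro T' hsimple hT'tor ⟨s, hs⟩
  haveI := hsimple
  haveI := IsSimpleModule.nontrivial R (T' : Type u)
  obtain ⟨p, hp⟩ := hc.exists_proj M
  have hT'σ : σ.app T' ≠ ⊥ := hc.app_ne_bot T' hT'tor (exists_ne 0)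
  have hfs : Surjective (s ∘ₗ p) := by
    simp only [LinearMap.coe_comp]
    exact hs.comp hp
  obtain ⟨C₀, N, hC₀, hNσ, ⟨g, hg⟩, ⟨w, hw⟩⟩ := hM T' (s ∘ₗ p) hfs hT'σ
  have hNnt : ∃ y : (N : Type u), y ≠ 0 := by
    obtain ⟨y, hy⟩ := (hc.app_ne_bot_iff N).mp hNσ
    exact ⟨hc.e • y, hy⟩
  have hgne : g ≠ 0 := by
    intro hz
    obtain ⟨y, hy⟩ := hNnt
    obtain ⟨x, rfl⟩ := hg y
    exact hy (by rw [hz]; rfl)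
  have hginj : Injective g := LinearMap.injective_of_ne_zero hgne
  have hNtor : ∀ y : (N : Type u), hc.e • y = y := by
    intro y
    obtain ⟨x, rfl⟩ := hg y
    rw [← map_smul, hT'tor x]
  have hNC : C N := hc.tors_quot hiso hT w hw hC₀ hNtor
  exact hiso N T' ⟨(LinearEquiv.ofBijective g ⟨hginj, hg⟩).symm⟩ hNC

/-- From a module `L` with `σ(L) ≠ 0`, produce a simple torsion quotient. -/
lemma exists_simple_quot (hHH : σ.HH) (L : RMod R) (hL : σ.app L ≠ ⊥) :
    ∃ T : RMod R, IsSimpleModule R (T : Type u) ∧ (∀ x : (T : Type u), hc.e • x = x) ∧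
      σ.app T ≠ ⊥ ∧ ∃ sL : (L : Type u) →ₗ[R] (T : Type u), Surjective sL := by
  have hXtor := hc.sigma_tor L
  have hXnt : ∃ x : ↥(σ.app L), x ≠ 0 := by
    obtain ⟨y, hy⟩ := (hc.app_ne_bot_iff L).mp hL
    exact ⟨⟨hc.e • y, hc.smul_mem L y⟩, by simpa [Subtype.ext_iff] using hy⟩
  obtain ⟨T, hsimple, hTtor, ⟨s1, hs1⟩, -⟩ :=
    hc.exists_simple hHH (RMod.of R ↥(σ.app L)) hXtor hXnt
  haveI := hsimple
  haveI := IsSimpleModule.nontrivial R (T : Type u)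
  obtain ⟨p, hp⟩ := hc.exists_proj L
  refine ⟨T, hsimple, hTtor, hc.app_ne_bot T hTtor (exists_ne 0), s1 ∘ₗ p, ?_⟩
  simp only [LinearMap.coe_comp]
  exact hs1.comp hp

/-- Every class satisfying (σ-CN) is a hereditary σ-torsion class. -/
lemma cn_to_hered (hiso : RespectsIso R C) (hHH : σ.HH) (hCN : σ.SigmaCN C) :
    σ.HereditarySigmaTorsionClass C := by
  classical
  have htf : ∀ M : RMod R, σ.app M = ⊥ → C M := by
    intro M hMb
    exact hCN M (fun L f hf hL => absurd (hc.surj_bot f hf hMb) hL)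
  have hquot : ∀ (M L : RMod R) (f : (M : Type u) →ₗ[R] (L : Type u)),
      Surjective f → C M → C (RMod.of R ↥(σ.app L)) := by
    intro M L f hf hM
    apply hCN
    intro L' g hg hL'
    obtain ⟨p, hp⟩ := hc.exists_proj L
    refine ⟨M, L', hM, hL', ⟨LinearMap.id, surjective_id⟩, ⟨g ∘ₗ (p ∘ₗ f), ?_⟩⟩
    simp only [LinearMap.coe_comp]
    exact hg.comp (hp.comp hf)
  have hsums : Preradical.ClassClosedUnderDirectSums C := by
    intro ι Ms hall
    apply hCN
    intro L f hf hL
    obtain ⟨T, hsimple, hTtor, hTσ, sL, hsL⟩ := hc.exists_simple_quot hHH L hL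
    haveI := hsimple
    haveI := IsSimpleModule.nontrivial R (T : Type u)
    set u := sL ∘ₗ f with hu
    have hus : Surjective u := by
      rw [hu]; simp only [LinearMap.coe_comp]; exact hsL.comp hf
    have hTnt : ∃ x : (T : Type u), x ≠ 0 := exists_ne 0
    have hexi : ∃ i : ι, u ∘ₗ DirectSum.lof R ι (fun i => ((Ms i : Type u))) i ≠ 0 := by
      by_contra hall0
      push_neg at hall0
      have hu0 : u = 0 := DirectSum.linearMap_ext R fun i => by
        rw [hall0 i]; ext x; simp
      obtain ⟨x, hx⟩ := hTnt
      obtain ⟨y, rfl⟩ := hus x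
      exact hx (by rw [hu0]; rfl)
    obtain ⟨i, hi⟩ := hexi
    have hisurj : Surjective (u ∘ₗ DirectSum.lof R ι (fun i => ((Ms i : Type u))) i) :=
      LinearMap.surjective_of_ne_zero hi
    exact ⟨Ms i, T, hall i, hTσ, ⟨sL, hsL⟩,
      ⟨u ∘ₗ DirectSum.lof R ι (fun i => ((Ms i : Type u))) i, hisurj⟩⟩
  have hext : Preradical.ClassClosedUnderExtensions C := by
    intro M A hA hQ
    apply hCN
    intro L f hf hL
    obtain ⟨T, hsimple, hTtor, hTσ, sL, hsL⟩ := hc.exists_simple_quot hHH L hL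
    haveI := hsimple
    haveI := IsSimpleModule.nontrivial R (T : Type u)
    set u : (M : Type u) →ₗ[R] (T : Type u) := sL ∘ₗ f with hu
    have hus : Surjective u := by
      rw [hu]; simp only [LinearMap.coe_comp]; exact hsL.comp hf
    by_cases hres : u ∘ₗ A.subtype = 0
    · have hAker : A ≤ LinearMap.ker u := by
        intro x hx
        have := congrArg (fun φ => φ (⟨x, hx⟩ : ↥A)) hres
        simpa using this
      refine ⟨RMod.of R ((M : Type u) ⧸ A), T, hQ, hTσ, ⟨sL, hsL⟩,
        ⟨A.liftQ u hAker, ?_⟩⟩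
      intro x
      obtain ⟨y, rfl⟩ := hus x
      exact ⟨A.mkQ y, by rw [Submodule.mkQ_apply, Submodule.liftQ_apply]⟩
    · exact ⟨RMod.of R ↥A, T, hA, hTσ, ⟨sL, hsL⟩,
        ⟨u ∘ₗ A.subtype, LinearMap.surjective_of_ne_zero hres⟩⟩
  have hhered : ∀ (M : RMod R) (N : Submodule R (M : Type u)), C M →
      C (RMod.of R ↥(σ.ap ↥N)) := by
    intro M N hM
    apply hCN
    intro L f hf hL
    obtain ⟨T, hsimple, hTtor, hTσ, sL, hsL⟩ := hc.exists_simple_quot hHH L hL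
    haveI := hsimple
    haveI := IsSimpleModule.nontrivial R (T : Type u)
    haveI := IsSimpleModule.nontrivial R (T : Type u)
    have hTnt : ∃ x : (T : Type u), x ≠ 0 := exists_ne 0
    have hus : Surjective (sL ∘ₗ f) := by
      simp only [LinearMap.coe_comp]; exact hsL.comp hf
    have hXtor : ∀ x : ↥(σ.ap (↥N)), hc.e • x = x := hc.sigma_tor (RMod.of R ↥N)
    obtain ⟨t1, ht1⟩ := exists_ne (0 : (T : Type u))
    obtain ⟨x1, hx1⟩ := hus t1
    have hune : (sL ∘ₗ f) ≠ 0 := fun hz => ht1 (by rw [← hx1, hz]; simp)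
    have hXnt : ∃ x : ↥(σ.ap (↥N)), x ≠ 0 :=
      ⟨x1, fun h0 => ht1 (by rw [← hx1, h0, map_zero])⟩
    have hXσ : σ.app (RMod.of R ↥(σ.ap (↥N))) ≠ ⊥ := hc.app_ne_bot _ hXtor hXnt
    obtain ⟨w, hw⟩ := (hc.sym hHH (RMod.of R ↥(σ.ap (↥N))) T hXσ hTtor hTnt).mpr
      ⟨sL ∘ₗ f, hune⟩
    have hwinj : Injective w := LinearMap.injective_of_ne_zero hw
    have hinj : Injective (N.subtype ∘ₗ ((σ.ap (↥N)).subtype ∘ₗ w)) := by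
      simp only [LinearMap.coe_comp]
      exact N.injective_subtype.comp ((σ.ap (↥N)).injective_subtype.comp hwinj)
    obtain ⟨t0, ht0⟩ := exists_ne (0 : (T : Type u))
    have hne : (N.subtype ∘ₗ ((σ.ap (↥N)).subtype ∘ₗ w)) t0 ≠ 0 :=
      fun hz => ht0 (hinj (by rw [hz, map_zero]))
    have hMσ : σ.app M ≠ ⊥ := (hc.app_ne_bot_iff M).mpr
      ⟨(N.subtype ∘ₗ ((σ.ap (↥N)).subtype ∘ₗ w)) t0, by
        rw [← map_smul, hTtor t0]; exact hne⟩
    have hnz : (N.subtype ∘ₗ ((σ.ap (↥N)).subtype ∘ₗ w)) ≠ 0 :=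
      fun hz => hne (by rw [hz]; rfl)
    obtain ⟨v, hv⟩ := (hc.sym hHH M T hMσ hTtor hTnt).mp
      ⟨N.subtype ∘ₗ ((σ.ap (↥N)).subtype ∘ₗ w), hnz⟩
    exact ⟨M, T, hM, hTσ, ⟨sL, hsL⟩, ⟨v, LinearMap.surjective_of_ne_zero hv⟩⟩
  exact ⟨⟨⟨htf, hquot⟩, hsums, hext⟩, htf, hhered⟩

end Classes

end Central

/-! ### Existence of the central idempotent: exact + costable preradicals split centrally -/

lemma exists_central (σ : Preradical R) (hle : σ.LeftExact) (hco : σ.Cohereditary)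
    (hcost : σ.Costable) : Nonempty (Central σ) := by
  classical
  obtain ⟨K, hK⟩ := hcost (RMod.of R R) inferInstance
  set I : Submodule R R := σ.app (RMod.of R R) with hI
  have h1 : (1 : R) ∈ I ⊔ K := by rw [hK.sup_eq_top]; trivial
  obtain ⟨e, he, k, hk, hek⟩ := Submodule.mem_sup.mp h1
  -- every element of I is fixed by right multiplication by e
  have hxe : ∀ x ∈ I, x * e = x := by
    intro x hx
    have hxe' : x * e ∈ I := by simpa [smul_eq_mul] using I.smul_mem x he
    have hxk' : x * k ∈ K := by simpa [smul_eq_mul] using K.smul_mem x hk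
    have hsum : x * e + x * k = x := by rw [← mul_add, hek, mul_one]
    have heq : x * k = x - x * e := eq_sub_of_add_eq' hsum
    have hxkI : x * k ∈ I := by rw [heq]; exact sub_mem hx hxe'
    have hzero : x * k = 0 := by
      have := hK.disjoint
      rw [Submodule.disjoint_def] at this
      exact this _ hxkI hxk'
    nth_rewrite 2 [← hsum]
    rw [hzero, add_zero]
  have hee : e * e = e := hxe e he
  have hmem : ∀ x : R, x ∈ I ↔ x * e = x := by
    intro x
    refine ⟨hxe x, fun h => ?_⟩
    rw [← h]
    simpa [smul_eq_mul] using I.smul_mem x he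
  -- I is a two-sided ideal: e * r ∈ I
  have herI : ∀ r : R, e * r ∈ I := by
    intro r
    let mr : (RMod.of R R : Type u) →ₗ[R] (RMod.of R R : Type u) :=
      { toFun := fun x => x * r
        map_add' := fun a b => add_mul a b r
        map_smul' := fun c x => by simp [smul_eq_mul, mul_assoc] }
    exact σ.map_le mr (Submodule.mem_map_of_mem he)
  have herer : ∀ r : R, e * r * e = e * r := fun r => hxe _ (herI r)
  -- centrality
  have hcen : ∀ r : R, r * e = e * r := by
    intro r
    set x : R := r * e - e * r * e with hxdef
    have hex : e * x = 0 := by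
      simp only [hxdef, mul_sub, ← mul_assoc, hee, sub_self]
    have hxe' : x * e = x := by
      simp only [hxdef, sub_mul, mul_assoc, hee]
    have hxI : x ∈ I := (hmem x).2 hxe'
    set A : Submodule R (RMod.of R R : Type u) := Submodule.span R {x} with hA
    have hxA : x ∈ A := Submodule.mem_span_singleton_self x
    set χ : (RMod.of R R : Type u) →ₗ[R] (RMod.of R (↥A) : Type u) :=
      LinearMap.toSpanSingleton R ↥A ⟨x, hxA⟩ with hχ
    have hχs : Surjective χ := by
      rintro ⟨y, hy⟩
      obtain ⟨c, hcy⟩ := Submodule.mem_span_singleton.mp hy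
      refine ⟨c, Subtype.ext ?_⟩
      simpa [hχ, LinearMap.toSpanSingleton_apply] using hcy
    have hbot : σ.app (RMod.of R (↥A)) = ⊥ := by
      rw [← hco (RMod.of R R) (RMod.of R ↥A) χ hχs]
      rw [Submodule.eq_bot_iff]
      rintro z hz
      obtain ⟨y, hyI, rfl⟩ := Submodule.mem_map.mp hz
      have hyx : y * x = 0 := by
        have hy' : y * e = y := hxe y hyI
        calc y * x = y * e * x := by rw [hy']
        _ = y * (e * x) := by rw [mul_assoc]
        _ = 0 := by rw [hex, mul_zero]
      apply Subtype.ext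
      simpa [hχ, LinearMap.toSpanSingleton_apply, smul_eq_mul] using hyx
    have hLE := hle (RMod.of R R) A
    have hxmem : x ∈ A ⊓ I := ⟨hxA, hxI⟩
    rw [← hLE] at hxmem
    obtain ⟨y, hy, hyx⟩ := Submodule.mem_map.mp hxmem
    have hy0 : y = 0 := (Submodule.eq_bot_iff _).1 hbot y hy
    have hx0 : x = 0 := by rw [← hyx, hy0]; simp
    have : r * e = e * r * e := by
      have := sub_eq_zero.mp (hxdef ▸ hx0)
      exact this
    rw [this, herer r]
  -- the membership characterisation
  refine ⟨⟨e, hcen, hee, ?_⟩⟩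
  intro M x
  constructor
  · intro hx
    have hsur : Surjective (Finsupp.linearCombination R (@id (M : Type u))) :=
      fun m => ⟨Finsupp.single m 1, by simp⟩
    have hcoeq := hco (RMod.of R ((M : Type u) →₀ R)) M
      (Finsupp.linearCombination R (@id (M : Type u))) hsur
    rw [← hcoeq] at hx
    obtain ⟨f, hf, rfl⟩ := Submodule.mem_map.mp hx
    have hcoord : ∀ m : (M : Type u), f m ∈ I := by
      intro m
      exact σ.map_le (M := RMod.of R ((M : Type u) →₀ R)) (N := RMod.of R R)
        (Finsupp.lapply m) (Submodule.mem_map_of_mem hf)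
    have hef : e • f = f := by
      ext m
      rw [Finsupp.smul_apply]
      have h1 : f m * e = f m := hxe _ (hcoord m)
      rw [smul_eq_mul, ← hcen (f m), h1]
    rw [← map_smul, hef]
  · intro hx
    have hmap : e • x ∈ σ.app M := by
      have := σ.map_le (M := RMod.of R R) (N := M)
        (LinearMap.toSpanSingleton R (M : Type u) x) (Submodule.mem_map_of_mem he)
      simpa [LinearMap.toSpanSingleton_apply] using this
    rwa [hx] at hmap

end SigmaHHProof

/-- For `σ` exact and costable with `R` satisfying `(σ-HH)`: for every
class `C` closed under isomorphism, being a σ-torsion class, satisfying `(σ-CN)`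
(i.e. being σ-conatural), and being a hereditary σ-torsion class all coincide. -/
theorem tors_eq_conat_eq_hereditary_tors_of_hh {R : Type u} [Ring R] (σ : Preradical R)
    (hle : σ.LeftExact) (hco : σ.Cohereditary) (hcost : σ.Costable) (hHH : σ.HH) :
    ∀ C : RMod R → Prop, RespectsIso R C →
      (σ.SigmaTorsionClass C ↔ σ.SigmaCN C) ∧
      (σ.SigmaCN C ↔ σ.HereditarySigmaTorsionClass C) := by
  obtain ⟨hc⟩ := SigmaHHProof.exists_central σ hle hco hcost
  intro C hiso
  exact ⟨⟨fun hT => hc.tors_to_cn hiso hHH hT, fun hcn => (hc.cn_to_hered hiso hHH hcn).1⟩,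
    ⟨fun hcn => hc.cn_to_hered hiso hHH hcn, fun hher => hc.tors_to_cn hiso hHH hher.1⟩⟩
end

section
/- Let σ be a left exact and stable preradical on R-Mod and let C be a class of R-modules closed under isomorphism. Then C is a σ-natural class if and only if C satisfies (σ-N). Here C is a σ-natural class means: there exists a σ-hereditary class A such that C = {M : for every submodule N ≤ M with σ(N) ∈ A one has σ(N) = 0}. -/
/-! Basic framework: bundled left `R`-modules (in the same universe as `R`),
preradicals on `R`-Mod, and the notions from the paper
"On σ-classes of modules with applications". -/

universe u

section Aux

universe v
variable {R : Type v} [Ring R]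

namespace Preradical

lemma ap_map_le' (σ : Preradical R) {M N : Type v} [AddCommGroup M] [Module R M]
    [AddCommGroup N] [Module R N] (f : M →ₗ[R] N) : (σ.ap M).map f ≤ σ.ap N :=
  σ.map_le (M := RMod.of R M) (N := RMod.of R N) f

lemma ap_equiv' (σ : Preradical R) {M N : Type v} [AddCommGroup M] [Module R M]
    [AddCommGroup N] [Module R N] (e : M ≃ₗ[R] N) :
    (σ.ap M).map (e : M →ₗ[R] N) = σ.ap N := by
  refine le_antisymm (σ.ap_map_le' _) ?_
  intro x hx
  have h2 : e.symm x ∈ σ.ap M :=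
    σ.ap_map_le' (e.symm : N →ₗ[R] M) ⟨x, hx, rfl⟩
  exact ⟨e.symm x, h2, e.apply_symm_apply x⟩

lemma ap_equiv_ne_bot (σ : Preradical R) {M N : Type v} [AddCommGroup M] [Module R M]
    [AddCommGroup N] [Module R N] (e : M ≃ₗ[R] N) (h : σ.ap M ≠ ⊥) : σ.ap N ≠ ⊥ := by
  rw [← σ.ap_equiv' e]
  intro hb
  exact h (Submodule.map_injective_of_injective e.injective (by rwa [Submodule.map_bot]))

lemma ap_idem (σ : Preradical R) (hle : σ.LeftExact) (M : Type v) [AddCommGroup M]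
    [Module R M] : σ.ap ↥(σ.ap M) = ⊤ := by
  have h := hle (RMod.of R M) (σ.ap M)
  rw [inf_idem] at h
  apply Submodule.map_injective_of_injective (Submodule.injective_subtype (σ.ap M))
  rw [h, Submodule.map_top, Submodule.range_subtype]

lemma ap_sub_of_bot (σ : Preradical R) (hle : σ.LeftExact) {M : Type v} [AddCommGroup M]
    [Module R M] (hM : σ.ap M = ⊥) (K : Submodule R M) : σ.ap ↥K = ⊥ := by
  have h := hle (RMod.of R M) K
  rw [show σ.app (RMod.of R M) = ⊥ from hM, inf_bot_eq] at h
  apply Submodule.map_injective_of_injective (Submodule.injective_subtype K)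
  rw [h, Submodule.map_bot]

end Preradical

end Aux

/-- For `σ` left exact and stable and `C` a class closed under
isomorphism: `C` is a σ-natural class iff `C` satisfies `(σ-N)`. -/
theorem sigmaNatural_iff_sigmaN {R : Type u} [Ring R] (σ : Preradical R)
    (hle : σ.LeftExact) (hst : σ.Stable) (C : RMod R → Prop) (hC : RespectsIso R C) :
    σ.SigmaNaturalClass C ↔ σ.SigmaN C := by
  constructor
  · -- σ-natural → (σ-N)
    rintro ⟨A, hAiso, ⟨hAF, hAher⟩, hA⟩ M hyp
    rw [hA M]
    intro L hAL
    by_contra hne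
    obtain ⟨C₀, N, hC₀, hN, ⟨g, hg⟩, ⟨h, hh⟩⟩ := hyp L hne
    set P := LinearMap.range h with hPdef
    have e : (N : Type u) ≃ₗ[R] ↥P := LinearEquiv.ofInjective h hh
    have hPne : σ.ap ↥P ≠ ⊥ := σ.ap_equiv_ne_bot e hN
    refine hPne ((hA C₀).1 hC₀ P ?_)
    have hgmem : ∀ x ∈ σ.ap (N : Type u), g x ∈ σ.ap ↥L := fun x hx =>
      σ.ap_map_le' g ⟨x, hx, rfl⟩
    set g' : ↥(σ.ap (N : Type u)) →ₗ[R] ↥(σ.ap ↥L) := g.restrict hgmem with hg'def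
    have hg'inj : Function.Injective g' := by
      intro x y hxy
      exact Subtype.ext (hg (congrArg Subtype.val hxy))
    set S := LinearMap.range g' with hSdef
    have hAS : A (RMod.of R ↥(σ.ap ↥S)) := hAher (RMod.of R ↥(σ.ap ↥L)) S hAL
    have e1 : ↥(σ.ap (N : Type u)) ≃ₗ[R] ↥S := LinearEquiv.ofInjective g' hg'inj
    have hStop : σ.ap ↥S = ⊤ := by
      rw [← σ.ap_equiv' e1, σ.ap_idem hle, Submodule.map_top, LinearEquiv.range]
    have eiso : ↥(σ.ap ↥S) ≃ₗ[R] ↥(σ.ap ↥P) :=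
      LinearEquiv.ofEq _ _ hStop ≪≫ₗ Submodule.topEquiv ≪≫ₗ e1.symm ≪≫ₗ
        e.submoduleMap (σ.ap (N : Type u)) ≪≫ₗ LinearEquiv.ofEq _ _ (σ.ap_equiv' e)
    exact hAiso _ _ ⟨eiso⟩ hAS
  · -- (σ-N) → σ-natural
    intro hσN
    refine ⟨fun X => ∀ (N : RMod R), σ.app N ≠ ⊥ →
        (∃ i : (N : Type u) →ₗ[R] (X : Type u), Function.Injective i) →
        ∀ C₀ : RMod R, C C₀ →
          ¬ ∃ j : (N : Type u) →ₗ[R] (C₀ : Type u), Function.Injective j,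
      ?_, ⟨?_, ?_⟩, ?_⟩
    · -- RespectsIso
      rintro X Y ⟨e⟩ hX N hN ⟨i, hi⟩ C₀ hC₀ hj
      exact hX N hN ⟨(e.symm : (Y : Type u) →ₗ[R] (X : Type u)).comp i,
        e.symm.injective.comp hi⟩ C₀ hC₀ hj
    · -- F_σ ⊆ A
      rintro X hX N hN ⟨i, hi⟩ C₀ _ _
      have e : (N : Type u) ≃ₗ[R] ↥(LinearMap.range i) := LinearEquiv.ofInjective i hi
      have h1 : σ.ap ↥(LinearMap.range i) ≠ ⊥ := σ.ap_equiv_ne_bot e hN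
      exact h1 (σ.ap_sub_of_bot hle hX _)
    · -- σ-hereditary
      rintro X K hAX N hN ⟨i, hi⟩ C₀ hC₀ hj
      refine hAX N hN ⟨K.subtype.comp ((σ.ap ↥K).subtype.comp i), ?_⟩ C₀ hC₀ hj
      exact K.injective_subtype.comp ((Submodule.injective_subtype _).comp hi)
    · -- the characterization of C
      intro M
      constructor
      · intro hM K hAK
        by_contra hKne
        have htop : σ.ap ↥(σ.ap ↥K) = ⊤ := σ.ap_idem hle ↥K
        have hNne : σ.ap ↥(σ.ap ↥K) ≠ ⊥ := by
          rw [htop]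
          intro hb
          apply hKne
          rw [Submodule.eq_bot_iff] at hb ⊢
          intro x hx
          exact congrArg Subtype.val (hb ⟨x, hx⟩ Submodule.mem_top)
        exact hAK (RMod.of R ↥(σ.ap ↥K)) hNne ⟨LinearMap.id, fun a b hab => hab⟩ M hM
          ⟨K.subtype.comp (σ.ap ↥K).subtype,
            K.injective_subtype.comp (Submodule.injective_subtype _)⟩
      · intro hM
        apply hσN M
        intro L hLne
        have hnA : ¬ (∀ (N : RMod R), σ.app N ≠ ⊥ →
            (∃ i : (N : Type u) →ₗ[R] ↥(σ.ap ↥L), Function.Injective i) →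
            ∀ C₀ : RMod R, C C₀ →
              ¬ ∃ j : (N : Type u) →ₗ[R] (C₀ : Type u), Function.Injective j) :=
          fun h => hLne (hM L h)
        push_neg at hnA
        obtain ⟨N, hNne, ⟨i, hi⟩, C₀, hC₀, j, hj⟩ := hnA
        exact ⟨C₀, N, hC₀, hNne,
          ⟨(σ.ap ↥L).subtype.comp i, (Submodule.injective_subtype _).comp hi⟩, ⟨j, hj⟩⟩
end

section
/- Let σ be a left exact and stable preradical on R-Mod. The following are equivalent: (1) R is a left σ-semiartinian ring; (2) every class C of R-modules satisfying (σ-N) is generated by a family of σ-torsion simple modules, i.e. there is a family S of σ-torsion simple modules contained in C such that C is the smallest class satisfying (σ-N) that contains S. -/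
/-! Basic framework: bundled left `R`-modules (in the same universe as `R`),
preradicals on `R`-Mod, and the notions from the paper
"On σ-classes of modules with applications". -/

universe u

section AuxLemmas

namespace Preradical

variable {R : Type u} [Ring R] (σ : Preradical R) {M N : Type u}
  [AddCommGroup M] [Module R M] [AddCommGroup N] [Module R N]

lemma ap_map_equiv (e : M ≃ₗ[R] N) : (σ.ap M).map (e : M →ₗ[R] N) = σ.ap N := by
  apply le_antisymm
  · exact σ.map_le (M := RMod.of R M) (N := RMod.of R N) (e : M →ₗ[R] N)
  · intro x hx
    have h2 : (σ.ap N).map (e.symm : N →ₗ[R] M) ≤ σ.ap M :=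
      σ.map_le (M := RMod.of R N) (N := RMod.of R M) _
    exact ⟨e.symm x, h2 ⟨x, hx, rfl⟩, by simp⟩

lemma ap_eq_bot_congr (e : M ≃ₗ[R] N) : σ.ap M = ⊥ ↔ σ.ap N = ⊥ := by
  rw [← σ.ap_map_equiv e]
  constructor
  · intro h; rw [h, Submodule.map_bot]
  · intro h
    rw [Submodule.eq_bot_iff]
    intro x hx
    have hmem : (e : M →ₗ[R] N) x ∈ Submodule.map (e : M →ₗ[R] N) (σ.ap M) := ⟨x, hx, rfl⟩
    rw [h, Submodule.mem_bot] at hmem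
    simpa using congrArg e.symm hmem

lemma ap_eq_top_congr (e : M ≃ₗ[R] N) : σ.ap M = ⊤ ↔ σ.ap N = ⊤ := by
  rw [← σ.ap_map_equiv e]
  constructor
  · intro h; rw [h, Submodule.map_top, LinearEquiv.range]
  · intro h
    have hinj := Submodule.map_injective_of_injective (f := (e : M →ₗ[R] N)) e.injective
    apply hinj
    rw [h, Submodule.map_top, LinearEquiv.range]

lemma ap_of_subsingleton [Subsingleton M] : σ.ap M = ⊥ := Subsingleton.elim _ _

end Preradical

lemma top_ne_bot_of_nontrivial {R : Type u} [Ring R] {M : Type u} [AddCommGroup M]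
    [Module R M] [Nontrivial M] : (⊤ : Submodule R M) ≠ ⊥ := by
  intro h
  obtain ⟨x, y, hxy⟩ := exists_pair_ne M
  apply hxy
  have hx : x ∈ (⊥ : Submodule R M) := h ▸ Submodule.mem_top
  have hy : y ∈ (⊥ : Submodule R M) := h ▸ Submodule.mem_top
  rw [Submodule.mem_bot] at hx hy
  rw [hx, hy]

end AuxLemmas

/-- For `σ` left exact and stable, TFAE: (1) `R` is left σ-semiartinian;
(2) every class satisfying `(σ-N)` is generated by a family of σ-torsion simple
modules. -/
theorem sigmaSemiartinian_iff_nat_generated_by_simples {R : Type u} [Ring R]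
    (σ : Preradical R) (hle : σ.LeftExact) (hst : σ.Stable) :
    σ.SigmaSemiartinian ↔
      ∀ C : RMod R → Prop, RespectsIso R C → σ.SigmaN C →
        ∃ S : RMod R → Prop,
          (∀ M : RMod R, S M → C M ∧ IsSimpleModule R (M : Type u) ∧ σ.app M = ⊤) ∧
          ∀ D : RMod R → Prop, RespectsIso R D → σ.SigmaN D →
            (∀ M : RMod R, S M → D M) → ∀ M : RMod R, C M → D M := by
  constructor
  · -- (1) → (2)
    intro hsa C hCiso hCN
    refine ⟨fun X => C X ∧ IsSimpleModule R (X : Type u) ∧ σ.app X = ⊤, fun M hM => hM, ?_⟩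
    intro D hDiso hDN hSD M hM
    apply hDN
    intro L hL
    have hLne : L ≠ ⊥ := by
      intro h
      apply hL
      subst h
      exact σ.ap_of_subsingleton
    obtain ⟨S₀, hS₀L, hSimp, hTor⟩ := hsa M L hLne hL
    haveI := hSimp
    haveI : Nontrivial ↥S₀ := IsSimpleModule.nontrivial R ↥S₀
    have hS₀ne : σ.app (RMod.of R ↥S₀) ≠ ⊥ := by
      rw [show σ.app (RMod.of R ↥S₀) = σ.ap ↥S₀ from rfl, hTor]
      exact top_ne_bot_of_nontrivial
    have hCS : C (RMod.of R ↥S₀) := by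
      apply hCN
      intro L' hL'
      have hL'ne : L' ≠ ⊥ := by
        intro h; apply hL'; subst h; exact σ.ap_of_subsingleton
      have hL'top : L' = ⊤ := (hSimp.1.2 L').resolve_left hL'ne
      refine ⟨M, RMod.of R ↥S₀, hM, hS₀ne, ?_, ?_⟩
      · subst hL'top
        refine ⟨((Submodule.topEquiv (R := R) (M := ↥S₀)).symm).toLinearMap, ?_⟩
        exact Submodule.topEquiv.symm.injective
      · exact ⟨S₀.subtype, S₀.injective_subtype⟩
    have hDS : D (RMod.of R ↥S₀) := hSD _ ⟨hCS, hSimp, hTor⟩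
    exact ⟨RMod.of R ↥S₀, RMod.of R ↥S₀, hDS, hS₀ne,
      ⟨Submodule.inclusion hS₀L, Submodule.inclusion_injective hS₀L⟩,
      ⟨LinearMap.id, fun a b h => h⟩⟩
  · -- (2) → (1)
    intro H M Nsub hNne hNσ
    obtain ⟨S, hS, hmin⟩ := H (fun _ => True) (fun _ _ _ _ => trivial) (fun _ _ => trivial)
    set D : RMod R → Prop := fun X => ∀ L : Submodule R (X : Type u), σ.ap ↥L ≠ ⊥ →
        ∃ T : Submodule R (X : Type u), T ≤ L ∧ IsSimpleModule R ↥T ∧ σ.ap ↥T = ⊤ with hD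
    have hDiso : RespectsIso R D := by
      intro X Y ⟨e⟩ hDX L hL
      set L' : Submodule R (X : Type u) := L.map (e.symm : (Y : Type u) →ₗ[R] (X : Type u))
        with hL'def
      have eL : ↥L ≃ₗ[R] ↥L' := e.symm.submoduleMap L
      have hL'σ : σ.ap ↥L' ≠ ⊥ := fun h => hL ((σ.ap_eq_bot_congr eL).mpr h)
      obtain ⟨T', hT'L, hT'simp, hT'σ⟩ := hDX L' hL'σ
      refine ⟨T'.map (e : (X : Type u) →ₗ[R] (Y : Type u)), ?_, ?_, ?_⟩
      · calc T'.map (e : (X : Type u) →ₗ[R] (Y : Type u))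
            ≤ L'.map (e : (X : Type u) →ₗ[R] (Y : Type u)) := Submodule.map_mono hT'L
          _ = L := by
              ext x
              simp only [hL'def, Submodule.mem_map]
              constructor
              · rintro ⟨y, ⟨z, hz, rfl⟩, rfl⟩
                simpa using hz
              · intro hx
                exact ⟨e.symm x, ⟨x, hx, rfl⟩, by simp⟩
      · haveI := hT'simp
        exact IsSimpleModule.congr (e.submoduleMap T').symm
      · exact (σ.ap_eq_top_congr (e.submoduleMap T')).mp hT'σ
    have hDN : σ.SigmaN D := by
      intro X hyp L hL
      obtain ⟨C₀, N₀, hC₀D, hN₀σ, ⟨g, hg⟩, ⟨h, hh⟩⟩ := hyp L hL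
      have e1 : (N₀ : Type u) ≃ₗ[R] ↥(LinearMap.range h) := LinearEquiv.ofInjective h hh
      have hPσ : σ.ap ↥(LinearMap.range h) ≠ ⊥ := by
        intro hb
        exact hN₀σ ((σ.ap_eq_bot_congr e1).mpr hb)
      obtain ⟨T, hTP, hTsimp, hTσ⟩ := hC₀D (LinearMap.range h) hPσ
      set T₁ : Submodule R (N₀ : Type u) := T.comap h with hT₁def
      have hT₁map : T₁.map h = T := by
        rw [hT₁def, Submodule.map_comap_eq, inf_eq_right.mpr hTP]
      have eT : ↥T₁ ≃ₗ[R] ↥T :=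
        (Submodule.equivMapOfInjective h hh T₁).trans (LinearEquiv.ofEq _ _ hT₁map)
      set T₂ : Submodule R ↥L := T₁.map g with hT₂def
      have eT₂ : ↥T₂ ≃ₗ[R] ↥T₁ := (Submodule.equivMapOfInjective g hg T₁).symm
      refine ⟨T₂.map L.subtype, ?_, ?_, ?_⟩
      · calc T₂.map L.subtype ≤ (⊤ : Submodule R ↥L).map L.subtype :=
              Submodule.map_mono le_top
          _ = L := by rw [Submodule.map_top, Submodule.range_subtype]
      · haveI := hTsimp
        haveI : IsSimpleModule R ↥T₁ := IsSimpleModule.congr eT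
        haveI : IsSimpleModule R ↥T₂ := IsSimpleModule.congr eT₂
        exact IsSimpleModule.congr
          (Submodule.equivMapOfInjective L.subtype L.injective_subtype T₂).symm
      · have h1 : σ.ap ↥T₁ = ⊤ := (σ.ap_eq_top_congr eT).mpr hTσ
        have h2 : σ.ap ↥T₂ = ⊤ := (σ.ap_eq_top_congr eT₂).mpr h1
        exact (σ.ap_eq_top_congr
          (Submodule.equivMapOfInjective L.subtype L.injective_subtype T₂).symm).mpr h2
    have hSD : ∀ X : RMod R, S X → D X := by
      intro X hSX L hL
      obtain ⟨-, hXsimp, hXσ⟩ := hS X hSX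
      have hLne : L ≠ ⊥ := by
        intro h; apply hL; subst h; exact σ.ap_of_subsingleton
      have hLtop : L = ⊤ := (hXsimp.1.2 L).resolve_left hLne
      subst hLtop
      refine ⟨⊤, le_refl _, ?_, ?_⟩
      · haveI := hXsimp
        exact IsSimpleModule.congr (Submodule.topEquiv)
      · exact (σ.ap_eq_top_congr (Submodule.topEquiv (R := R) (M := (X : Type u)))).mpr hXσ
    exact hmin D hDiso hDN hSD M trivial Nsub hNσ
end

section
/- Let σ be an exact and costable preradical on R-Mod. The following are equivalent: (1) every σ-torsion simple module is paraprojective; (2) every class of R-modules satisfying (σ-N) is a σ-torsion class; (3) every class of R-modules satisfying (σ-N) is σ-cohereditary. -/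
/-! Basic framework: bundled left `R`-modules (in the same universe as `R`),
preradicals on `R`-Mod, and the notions from the paper
"On σ-classes of modules with applications". -/

universe u

/-! ### Auxiliary lemmas -/

namespace Preradical

variable {R : Type u} [Ring R] (σ : Preradical R)

lemma ap_map_subtype' (hle : σ.LeftExact) {X : Type u} [AddCommGroup X] [Module R X]
    (A : Submodule R X) : (σ.ap ↥A).map A.subtype = A ⊓ σ.ap X :=
  hle (RMod.of R X) A

lemma ap_eq_top_of' (hle : σ.LeftExact) {X : Type u} [AddCommGroup X] [Module R X]
    (hX : σ.ap X = ⊤) (A : Submodule R X) : σ.ap ↥A = ⊤ := by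
  apply Submodule.map_injective_of_injective A.injective_subtype
  rw [σ.ap_map_subtype' hle A, hX, inf_top_eq, Submodule.map_subtype_top]

lemma ap_sub_top' (hle : σ.LeftExact) (X : Type u) [AddCommGroup X] [Module R X] :
    σ.ap ↥(σ.ap X) = ⊤ := by
  apply Submodule.map_injective_of_injective (σ.ap X).injective_subtype
  rw [σ.ap_map_subtype' hle, inf_idem, Submodule.map_subtype_top]

lemma ap_ne_bot_of_mem' (hle : σ.LeftExact) {X : Type u} [AddCommGroup X] [Module R X]
    {A : Submodule R X} {v : X} (hvA : v ∈ A) (hv : v ∈ σ.ap X) (h0 : v ≠ 0) :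
    σ.ap ↥A ≠ ⊥ := by
  intro hb
  have h := σ.ap_map_subtype' hle A
  rw [hb, Submodule.map_bot] at h
  have hmem : v ∈ A ⊓ σ.ap X := Submodule.mem_inf.mpr ⟨hvA, hv⟩
  rw [← h] at hmem
  exact h0 (by simpa using hmem)

lemma ap_eq_bot_of_equiv' {X Y : Type u} [AddCommGroup X] [Module R X] [AddCommGroup Y]
    [Module R Y] (e : X ≃ₗ[R] Y) (h : σ.ap X = ⊥) : σ.ap Y = ⊥ := by
  rw [eq_bot_iff]
  intro y hy
  have hm : e.symm y ∈ σ.ap X :=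
    σ.map_le (M := RMod.of R Y) (N := RMod.of R X) (e.symm : Y →ₗ[R] X) ⟨y, hy, rfl⟩
  rw [h, Submodule.mem_bot] at hm
  have : y = 0 := by
    have := congrArg e hm
    simpa using this
  simp [this]

lemma top_ne_bot' (X : Type u) [AddCommGroup X] [Module R X] [Nontrivial X] :
    (⊤ : Submodule R X) ≠ ⊥ := by
  intro h
  obtain ⟨x, hx⟩ := exists_ne (0 : X)
  have : x ∈ (⊥ : Submodule R X) := h ▸ Submodule.mem_top
  exact hx (by simpa using this)

lemma sigmaN_tf' {C : RMod R → Prop} (hle : σ.LeftExact) (hN : σ.SigmaN C) :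
    ∀ M : RMod R, σ.app M = ⊥ → C M := by
  intro M hM
  apply hN
  intro L hL
  refine absurd ?_ hL
  apply Submodule.map_injective_of_injective L.injective_subtype
  rw [σ.ap_map_subtype' hle L, Submodule.map_bot,
    show σ.ap (M : Type u) = ⊥ from hM, inf_bot_eq]

lemma sigmaN_sums' {C : RMod R → Prop} (hle : σ.LeftExact) (hN : σ.SigmaN C) :
    ClassClosedUnderDirectSums C := by
  classical
  intro ι Mf hC
  apply hN
  intro L hL
  obtain ⟨u, hu, hu0⟩ := (Submodule.ne_bot_iff _).mp hL
  set D := DirectSum ι fun i => ((Mf i) : Type u) with hD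
  set T : Set ℕ :=
    {n | ∃ y : ↥L, y ∈ σ.ap ↥L ∧ y ≠ 0 ∧ (DFinsupp.support (y : D)).card = n} with hT
  have hTne : T.Nonempty := ⟨_, u, hu, hu0, rfl⟩
  obtain ⟨y, hy, hy0, hycard⟩ := Nat.sInf_mem hTne
  have hyD : (y : D) ≠ 0 := fun h => hy0 (by exact_mod_cast h)
  have hsupp : (DFinsupp.support (y : D)).Nonempty :=
    Finset.nonempty_iff_ne_empty.mpr fun h => hyD (DFinsupp.support_eq_empty.mp h)
  obtain ⟨i, hi⟩ := hsupp
  refine ⟨Mf i, RMod.of R ↥(R ∙ y), hC i,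
    σ.ap_ne_bot_of_mem' hle (Submodule.mem_span_singleton_self y) hy hy0,
    ⟨(R ∙ y).subtype, Submodule.injective_subtype _⟩, ?_⟩
  refine ⟨(DirectSum.component R ι _ i).comp (L.subtype.comp (R ∙ y).subtype), ?_⟩
  rw [← LinearMap.ker_eq_bot, eq_bot_iff]
  intro z hz
  rw [LinearMap.mem_ker] at hz
  obtain ⟨r, hr⟩ := Submodule.mem_span_singleton.mp z.2
  have hzi : ((z : ↥L) : D) i = 0 := hz
  have hry0 : r • y = 0 := by
    by_contra hne
    have hmem : r • y ∈ σ.ap ↥L := Submodule.smul_mem _ r hy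
    have hcoe : ((r • y : ↥L) : D) = r • (y : D) := rfl
    have hnotmem : i ∉ (r • (y : D)).support := by
      rw [DFinsupp.mem_support_iff, not_not]
      have : ((r • y : ↥L) : D) i = 0 := by rw [hr]; exact hzi
      rwa [hcoe] at this
    have hlt : ((r • (y : D)).support).card < sInf T := by
      rw [← hycard]
      exact Finset.card_lt_card
        ((Finset.ssubset_iff_of_subset (DFinsupp.support_smul r (y : D))).mpr
          ⟨i, hi, hnotmem⟩)
    have hge : sInf T ≤ ((r • (y : D)).support).card :=
      Nat.sInf_le ⟨r • y, hmem, hne, by rw [hcoe]⟩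
    omega
  have : (z : ↥L) = 0 := by rw [← hr, hry0]
  simpa [Submodule.mem_bot] using Subtype.ext this

lemma sigmaN_ext' {C : RMod R → Prop} (hle : σ.LeftExact) (hN : σ.SigmaN C) :
    ClassClosedUnderExtensions C := by
  intro Mb A hA hQ
  apply hN
  intro L hL
  have hmap := σ.ap_map_subtype' hle L
  set L' := Submodule.map L.subtype (σ.ap ↥L) with hL'
  have hL'le : L' ≤ L ⊓ σ.ap (Mb : Type u) := le_of_eq hmap
  obtain ⟨u, hu, hu0⟩ := (Submodule.ne_bot_iff _).mp hL
  have huL' : (u : (Mb : Type u)) ∈ L' := ⟨u, hu, rfl⟩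
  have hu0' : (u : (Mb : Type u)) ≠ 0 := fun h => hu0 (by exact_mod_cast h)
  by_cases hcase : L' ⊓ A = ⊥
  · refine ⟨RMod.of R ((Mb : Type u) ⧸ A), RMod.of R ↥L', hQ,
      σ.ap_ne_bot_of_mem' hle huL' (hL'le huL').2 hu0',
      ⟨Submodule.inclusion (fun x hx => (hL'le hx).1), Submodule.inclusion_injective _⟩, ?_⟩
    refine ⟨A.mkQ.comp L'.subtype, ?_⟩
    rw [← LinearMap.ker_eq_bot, eq_bot_iff]
    intro z hz
    rw [LinearMap.mem_ker] at hz
    have hzA : (z : (Mb : Type u)) ∈ A := by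
      have : A.mkQ (z : (Mb : Type u)) = 0 := hz
      rwa [Submodule.mkQ_apply, Submodule.Quotient.mk_eq_zero] at this
    have : (z : (Mb : Type u)) ∈ L' ⊓ A := ⟨z.2, hzA⟩
    rw [hcase] at this
    simpa [Submodule.mem_bot] using Subtype.ext (by simpa using this : (z : (Mb : Type u)) = 0)
  · obtain ⟨v, hv, hv0⟩ := (Submodule.ne_bot_iff _).mp hcase
    refine ⟨RMod.of R ↥A, RMod.of R ↥(L' ⊓ A), hA,
      σ.ap_ne_bot_of_mem' hle hv (hL'le (Submodule.mem_inf.mp hv).1).2 hv0,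
      ⟨Submodule.inclusion (le_trans inf_le_left (fun x hx => (hL'le hx).1)),
        Submodule.inclusion_injective _⟩,
      ⟨Submodule.inclusion inf_le_right, Submodule.inclusion_injective _⟩⟩

end Preradical

/-- For `σ` exact and costable, TFAE: (1) every σ-torsion simple module
is paraprojective; (2) every class satisfying `(σ-N)` is a σ-torsion class; (3) every
class satisfying `(σ-N)` is σ-cohereditary. -/
theorem paraprojective_iff_nat_subset_TORS {R : Type u} [Ring R] (σ : Preradical R)
    (hle : σ.LeftExact) (hco : σ.Cohereditary) (hcost : σ.Costable) :
    ((∀ S : RMod R, IsSimpleModule R (S : Type u) → σ.app S = ⊤ →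
        Paraprojective R (S : Type u)) ↔
      ∀ C : RMod R → Prop, RespectsIso R C → σ.SigmaN C → σ.SigmaTorsionClass C) ∧
    ((∀ C : RMod R → Prop, RespectsIso R C → σ.SigmaN C → σ.SigmaTorsionClass C) ↔
      ∀ C : RMod R → Prop, RespectsIso R C → σ.SigmaN C →
        σ.SigmaCohereditaryClass C) := by
  classical
  have h13 : (∀ S : RMod R, IsSimpleModule R (S : Type u) → σ.app S = ⊤ →
        Paraprojective R (S : Type u)) →
      ∀ C : RMod R → Prop, RespectsIso R C → σ.SigmaN C → σ.SigmaCohereditaryClass C := by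
    intro hP1 C hiso hN
    refine ⟨σ.sigmaN_tf' hle hN, ?_⟩
    intro M Q f hf hCM
    apply hN
    intro L hL
    have hTtop : σ.ap ↥(σ.app Q) = ⊤ := σ.ap_sub_top' hle (Q : Type u)
    have hLtop : σ.ap ↥L = ⊤ := σ.ap_eq_top_of' hle hTtop L
    obtain ⟨w, -, hw0⟩ := (Submodule.ne_bot_iff _).mp hL
    set g' := LinearMap.toSpanSingleton R ↥L w with hg'
    have hk_ne : LinearMap.ker g' ≠ ⊤ := by
      intro h
      have h1 : (1 : R) ∈ LinearMap.ker g' := h ▸ Submodule.mem_top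
      rw [LinearMap.mem_ker, hg', LinearMap.toSpanSingleton_apply, one_smul] at h1
      exact hw0 h1
    obtain ⟨mI, hmax, hkI⟩ := Ideal.exists_le_maximal _ hk_ne
    have hsimple : IsSimpleModule R (R ⧸ mI) :=
      isSimpleModule_iff_isCoatom.mpr (Ideal.isMaximal_def.mp hmax)
    haveI := hsimple
    have hker_sub : LinearMap.ker g' ≤ LinearMap.ker mI.mkQ := by
      rw [Submodule.ker_mkQ]; exact hkI
    set τ : ↥(LinearMap.range g') →ₗ[R] (R ⧸ mI) :=
      ((LinearMap.ker g').liftQ mI.mkQ hker_sub).comp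
        (g'.quotKerEquivRange.symm : ↥(LinearMap.range g') →ₗ[R] R ⧸ LinearMap.ker g') with hτ
    have hτsurj : Function.Surjective τ := by
      intro s
      obtain ⟨r, rfl⟩ := Submodule.mkQ_surjective mI s
      refine ⟨g'.quotKerEquivRange (Submodule.Quotient.mk r), ?_⟩
      rw [hτ]
      simp [Submodule.liftQ_apply, Submodule.mkQ_apply]
    have hrgtop : σ.ap ↥(LinearMap.range g') = ⊤ := σ.ap_eq_top_of' hle hLtop _
    have hStop : σ.ap (R ⧸ mI) = ⊤ := by
      have hc := hco (RMod.of R ↥(LinearMap.range g')) (RMod.of R (R ⧸ mI)) τ hτsurj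
      rw [show σ.app (RMod.of R ↥(LinearMap.range g')) = ⊤ from hrgtop,
        Submodule.map_top, LinearMap.range_eq_top.mpr hτsurj] at hc
      exact hc.symm
    have hpara := hP1 (RMod.of R (R ⧸ mI)) hsimple hStop
    obtain ⟨gS, hgS⟩ := hpara (RMod.of R ↥(LinearMap.range g')) ⟨τ, hτsurj⟩
    set q : (Q : Type u) := ((w : ↥(σ.app Q)) : (Q : Type u)) with hq
    obtain ⟨m, hm⟩ := hf q
    set g'' := LinearMap.toSpanSingleton R (M : Type u) m with hg''
    have hker2 : LinearMap.ker g'' ≤ LinearMap.ker mI.mkQ := by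
      rw [Submodule.ker_mkQ]
      intro r hr
      apply hkI
      rw [LinearMap.mem_ker, hg'', LinearMap.toSpanSingleton_apply] at hr
      have h1 : r • q = 0 := by rw [← hm, ← map_smul, hr, map_zero]
      have hc : (((r • w : ↥L) : ↥(σ.app Q)) : (Q : Type u)) = r • q := by
        rw [hq]; norm_cast
      have h2 : r • w = 0 := by
        have := hc.trans h1
        exact_mod_cast this
      rw [LinearMap.mem_ker, hg', LinearMap.toSpanSingleton_apply]
      exact h2
    set τ₂ : ↥(LinearMap.range g'') →ₗ[R] (R ⧸ mI) :=
      ((LinearMap.ker g'').liftQ mI.mkQ hker2).comp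
        (g''.quotKerEquivRange.symm : ↥(LinearMap.range g'') →ₗ[R] R ⧸ LinearMap.ker g'')
        with hτ₂
    have hτ₂surj : Function.Surjective τ₂ := by
      intro s
      obtain ⟨r, rfl⟩ := Submodule.mkQ_surjective mI s
      refine ⟨g''.quotKerEquivRange (Submodule.Quotient.mk r), ?_⟩
      rw [hτ₂]
      simp [Submodule.liftQ_apply, Submodule.mkQ_apply]
    obtain ⟨gM, hgM⟩ := hpara (RMod.of R ↥(LinearMap.range g'')) ⟨τ₂, hτ₂surj⟩
    refine ⟨M, RMod.of R (R ⧸ mI), hCM, ?_,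
      ⟨(LinearMap.range g').subtype.comp gS,
        (Submodule.injective_subtype _).comp hgS⟩,
      ⟨(LinearMap.range g'').subtype.comp gM,
        (Submodule.injective_subtype _).comp hgM⟩⟩
    rw [show σ.app (RMod.of R (R ⧸ mI)) = ⊤ from hStop]
    haveI : Nontrivial (R ⧸ mI) := IsSimpleModule.nontrivial R (R ⧸ mI)
    exact Preradical.top_ne_bot' (R ⧸ mI)
  have h31 : (∀ C : RMod R → Prop, RespectsIso R C → σ.SigmaN C →
        σ.SigmaCohereditaryClass C) →
      ∀ S : RMod R, IsSimpleModule R (S : Type u) → σ.app S = ⊤ →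
        Paraprojective R (S : Type u) := by
    intro hP3 S hSsimp hStor N₀ hex
    obtain ⟨f, hfsurj⟩ := hex
    haveI := hSsimp
    haveI : Nontrivial (S : Type u) := IsSimpleModule.nontrivial R (S : Type u)
    by_cases hC : ∃ g : (S : Type u) →ₗ[R] (N₀ : Type u), Function.Injective g
    · exact hC
    exfalso
    set C : RMod R → Prop :=
      fun X => ¬ ∃ g : (S : Type u) →ₗ[R] (X : Type u), Function.Injective g with hCdef
    have hiso : RespectsIso R C := by
      rintro X Y ⟨e⟩ hX ⟨g, hg⟩
      exact hX ⟨(e.symm : (Y : Type u) →ₗ[R] (X : Type u)).comp g, e.symm.injective.comp hg⟩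
    have hsn : σ.SigmaN C := by
      intro Mx hH
      rintro ⟨g, hg⟩
      have hLne : σ.ap ↥(LinearMap.range g) ≠ ⊥ := by
        intro hb
        have hb' : σ.ap (S : Type u) = ⊥ :=
          σ.ap_eq_bot_of_equiv' (LinearEquiv.ofInjective g hg).symm hb
        rw [show σ.ap (S : Type u) = ⊤ from hStor] at hb'
        exact Preradical.top_ne_bot' (S : Type u) hb'
      obtain ⟨C₀, Nx, hC₀, hNx, ⟨gN, hgN⟩, ⟨hN', hhN'⟩⟩ := hH (LinearMap.range g) hLne
      set e := LinearEquiv.ofInjective g hg with he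
      set φ : (Nx : Type u) →ₗ[R] (S : Type u) :=
        (e.symm : ↥(LinearMap.range g) →ₗ[R] (S : Type u)).comp gN with hφ
      have hφinj : Function.Injective φ := e.symm.injective.comp hgN
      have hNnontriv : ∃ n : (Nx : Type u), n ≠ 0 := by
        obtain ⟨n, _, hn0⟩ := (Submodule.ne_bot_iff _).mp hNx
        exact ⟨n, hn0⟩
      have hrange : LinearMap.range φ = ⊤ := by
        rcases eq_bot_or_eq_top (LinearMap.range φ) with h | h
        · obtain ⟨n, hn0⟩ := hNnontriv
          have hmem : φ n ∈ LinearMap.range φ := ⟨n, rfl⟩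
          rw [h, Submodule.mem_bot] at hmem
          exact absurd (hφinj (by rw [hmem, map_zero])) hn0
        · exact h
      have hφbij : Function.Bijective φ := ⟨hφinj, LinearMap.range_eq_top.mp hrange⟩
      set ψ := LinearEquiv.ofBijective φ hφbij with hψ
      exact hC₀ ⟨hN'.comp (ψ.symm : (S : Type u) →ₗ[R] (Nx : Type u)),
        hhN'.comp ψ.symm.injective⟩
    have hcoh := hP3 C hiso hsn
    have hCN₀ : C N₀ := hC
    have hfin := hcoh.2 N₀ S f hfsurj hCN₀
    rw [hStor] at hfin
    exact hfin ⟨(Submodule.topEquiv (M := (S : Type u))).symm.toLinearMap,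
      (Submodule.topEquiv (M := (S : Type u))).symm.injective⟩
  have h32 : (∀ C : RMod R → Prop, RespectsIso R C → σ.SigmaN C →
        σ.SigmaCohereditaryClass C) →
      ∀ C : RMod R → Prop, RespectsIso R C → σ.SigmaN C → σ.SigmaTorsionClass C :=
    fun h C hi hN => ⟨h C hi hN, σ.sigmaN_sums' hle hN, σ.sigmaN_ext' hle hN⟩
  have h23 : (∀ C : RMod R → Prop, RespectsIso R C → σ.SigmaN C → σ.SigmaTorsionClass C) →
      ∀ C : RMod R → Prop, RespectsIso R C → σ.SigmaN C → σ.SigmaCohereditaryClass C :=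
    fun h C hi hN => (h C hi hN).1
  exact ⟨⟨fun p1 => h32 (h13 p1), fun p2 => h31 (h23 p2)⟩, ⟨h23, h32⟩⟩
end

section
/- Let σ be an exact and costable preradical on R-Mod. If R satisfies (σ-HH), then a class C of R-modules closed under isomorphism satisfies (σ-N) if and only if it satisfies (σ-CN); in particular the σ-natural classes and the σ-conatural classes coincide. -/
/-! Basic framework: bundled left `R`-modules (in the same universe as `R`),
preradicals on `R`-Mod, and the notions from the paper
"On σ-classes of modules with applications". -/

universe u

namespace Preradical

variable {R : Type u} [Ring R] (σ : Preradical R)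

private lemma aux_top_ne_bot {X : Type u} [AddCommGroup X] [Module R X] [Nontrivial X] :
    (⊤ : Submodule R X) ≠ ⊥ := by
  intro h
  obtain ⟨a, ha⟩ := exists_ne (0 : X)
  have : a ∈ (⊥ : Submodule R X) := h ▸ Submodule.mem_top
  exact ha ((Submodule.mem_bot R).mp this)

private lemma aux_nontrivial_of_ne_bot {X : Type u} [AddCommGroup X] [Module R X]
    {p : Submodule R X} (hp : p ≠ ⊥) : Nontrivial ↥p := by
  obtain ⟨x, hx, hx0⟩ := p.ne_bot_iff.mp hp
  exact ⟨⟨x, hx⟩, 0, by simp [Subtype.ext_iff, hx0]⟩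

private lemma aux_nontrivial_of_equiv {A B : Type u} [AddCommGroup A] [Module R A]
    [AddCommGroup B] [Module R B] [Nontrivial A] (e : A ≃ₗ[R] B) : Nontrivial B := by
  obtain ⟨a, ha⟩ := exists_ne (0 : A)
  exact ⟨e a, 0, fun h => ha (e.map_eq_zero_iff.mp h)⟩

private lemma aux_injective_ne_zero {A B : Type u} [AddCommGroup A] [Module R A]
    [AddCommGroup B] [Module R B] [Nontrivial A] {f : A →ₗ[R] B}
    (hf : Function.Injective f) : f ≠ 0 := by
  obtain ⟨a, ha⟩ := exists_ne (0 : A)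
  refine DFunLike.ne_iff.mpr ⟨a, fun h => ha (hf ?_)⟩
  rw [map_zero]
  simpa using h

private lemma aux_surjective_ne_zero {A B : Type u} [AddCommGroup A] [Module R A]
    [AddCommGroup B] [Module R B] [Nontrivial B] {f : A →ₗ[R] B}
    (hf : Function.Surjective f) : f ≠ 0 := by
  obtain ⟨b, hb⟩ := exists_ne (0 : B)
  obtain ⟨a, rfl⟩ := hf b
  exact DFunLike.ne_iff.mpr ⟨a, by simpa using hb⟩

private lemma aux_comp_inj_ne_zero {A B C' : Type u} [AddCommGroup A] [Module R A]
    [AddCommGroup B] [Module R B] [AddCommGroup C'] [Module R C']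
    {g : B →ₗ[R] C'} (hg : Function.Injective g) {f : A →ₗ[R] B}
    (hf : f ≠ 0) : g.comp f ≠ 0 := by
  obtain ⟨a, ha⟩ := DFunLike.ne_iff.mp hf
  refine DFunLike.ne_iff.mpr ⟨a, fun h => ha ?_⟩
  have : g (f a) = g 0 := by rw [map_zero]; simpa using h
  simpa using hg this

private lemma aux_comp_equiv_ne_zero_right {A B C' : Type u} [AddCommGroup A] [Module R A]
    [AddCommGroup B] [Module R B] [AddCommGroup C'] [Module R C']
    (e : A ≃ₗ[R] B) {f : B →ₗ[R] C'} (hf : f ≠ 0) :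
    f.comp (e : A →ₗ[R] B) ≠ 0 := by
  obtain ⟨b, hb⟩ := DFunLike.ne_iff.mp hf
  refine DFunLike.ne_iff.mpr ⟨e.symm b, fun h => hb ?_⟩
  simpa [e.apply_symm_apply] using h

private lemma aux_map_le {M N : Type u} [AddCommGroup M] [Module R M] [AddCommGroup N]
    [Module R N] (f : M →ₗ[R] N) : (σ.ap M).map f ≤ σ.ap N :=
  σ.map_le (M := RMod.of R M) (N := RMod.of R N) f

private lemma aux_ne_bot_of_injective {M N : Type u} [AddCommGroup M] [Module R M]
    [AddCommGroup N] [Module R N] (f : M →ₗ[R] N) (hf : Function.Injective f)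
    (h : σ.ap M ≠ ⊥) : σ.ap N ≠ ⊥ := by
  obtain ⟨x, hx, hx0⟩ := (σ.ap M).ne_bot_iff.mp h
  refine (σ.ap N).ne_bot_iff.mpr ⟨f x, σ.aux_map_le f ⟨x, hx, rfl⟩, fun h0 => hx0 (hf ?_)⟩
  rw [map_zero]; exact h0

private lemma aux_torsion_of_le (hle : σ.LeftExact) {M : Type u} [AddCommGroup M] [Module R M]
    (A : Submodule R M) (hA : A ≤ σ.ap M) : σ.ap ↥A = ⊤ := by
  apply Submodule.map_injective_of_injective A.injective_subtype
  have h := hle (RMod.of R M) A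
  rw [Submodule.map_top, Submodule.range_subtype]
  exact h.trans (inf_eq_left.mpr hA)

private lemma aux_torsion_of_surjective (hco : σ.Cohereditary) {M N : Type u} [AddCommGroup M]
    [Module R M] [AddCommGroup N] [Module R N] (f : M →ₗ[R] N) (hf : Function.Surjective f)
    (hM : σ.ap M = ⊤) : σ.ap N = ⊤ := by
  have h := hco (RMod.of R M) (RMod.of R N) f hf
  have hM' : σ.app (RMod.of R M) = ⊤ := hM
  rw [hM', Submodule.map_top, LinearMap.range_eq_top.mpr hf] at h
  exact h.symm

private lemma aux_ne_bot_of_surjective (hco : σ.Cohereditary) {M N : Type u} [AddCommGroup M]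
    [Module R M] [AddCommGroup N] [Module R N] (f : M →ₗ[R] N) (hf : Function.Surjective f)
    (hN : σ.ap N ≠ ⊥) : σ.ap M ≠ ⊥ := by
  intro h
  have h2 := hco (RMod.of R M) (RMod.of R N) f hf
  have h' : σ.app (RMod.of R M) = ⊥ := h
  rw [h', Submodule.map_bot] at h2
  exact hN h2.symm

/-- Key lemma: if `σ(M) ≠ 0` then `M` contains a simple σ-torsion module. -/
private lemma aux_exists_simple (hle : σ.LeftExact) (hco : σ.Cohereditary) (hHH : σ.HH)
    {M : Type u} [AddCommGroup M] [Module R M] (hM : σ.ap M ≠ ⊥) :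
    ∃ S : RMod R, IsSimpleModule R (S : Type u) ∧ σ.app S = ⊤ ∧
      ∃ f : (S : Type u) →ₗ[R] M, Function.Injective f := by
  obtain ⟨x, hxmem, hx0⟩ := (σ.ap M).ne_bot_iff.mp hM
  set Cx : Submodule R M := R ∙ x with hCxdef
  have hCle : Cx ≤ σ.ap M := (Submodule.span_singleton_le_iff_mem x _).mpr hxmem
  have hCtor : σ.ap ↥Cx = ⊤ := σ.aux_torsion_of_le hle Cx hCle
  haveI hCnt : Nontrivial ↥Cx :=
    ⟨⟨x, Submodule.mem_span_singleton_self x⟩, 0, by simp [Subtype.ext_iff, hx0]⟩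
  haveI : Nontrivial (Submodule R ↥Cx) := ⟨⊤, ⊥, aux_top_ne_bot⟩
  haveI : IsCoatomic (Submodule R ↥Cx) := by
    apply CompleteLattice.coatomic_of_top_compact
    rw [← Submodule.fg_iff_compact]
    exact Module.finite_def.mp inferInstance
  obtain ⟨K, hK⟩ := IsCoatomic.exists_coatom (α := Submodule R ↥Cx)
  haveI hS0 : IsSimpleModule R (↥Cx ⧸ K) := isSimpleModule_iff_isCoatom.mpr hK
  haveI : Nontrivial (↥Cx ⧸ K) := IsSimpleModule.nontrivial R (↥Cx ⧸ K)
  have hS0tor : σ.ap (↥Cx ⧸ K) = ⊤ :=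
    σ.aux_torsion_of_surjective hco K.mkQ (Submodule.mkQ_surjective K) hCtor
  have hS0ne : σ.ap (↥Cx ⧸ K) ≠ ⊥ := ne_of_eq_of_ne hS0tor aux_top_ne_bot
  have hCne : σ.ap ↥Cx ≠ ⊥ := ne_of_eq_of_ne hCtor aux_top_ne_bot
  let cS : ↥(σ.ap (↥Cx ⧸ K)) ≃ₗ[R] (↥Cx ⧸ K) :=
    (LinearEquiv.ofEq _ _ hS0tor).trans Submodule.topEquiv
  haveI : Nontrivial ↥(σ.ap (↥Cx ⧸ K)) := Preradical.aux_nontrivial_of_equiv cS.symm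
  have hH := hHH (RMod.of R ↥Cx) (RMod.of R (↥Cx ⧸ K)) hCne hS0ne
  have hRhs : ∃ f : ↥Cx →ₗ[R] ↥(σ.ap (↥Cx ⧸ K)), f ≠ 0 := by
    refine ⟨(cS.symm : (↥Cx ⧸ K) →ₗ[R] ↥(σ.ap (↥Cx ⧸ K))).comp K.mkQ, ?_⟩
    exact aux_surjective_ne_zero (R := R)
      (cS.symm.surjective.comp (Submodule.mkQ_surjective K))
  obtain ⟨g, hg⟩ := hH.mpr hRhs
  have hg' : (g.comp (cS.symm : (↥Cx ⧸ K) →ₗ[R] ↥(σ.ap (↥Cx ⧸ K)))) ≠ 0 :=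
    Preradical.aux_comp_equiv_ne_zero_right cS.symm hg
  refine ⟨RMod.of R (↥Cx ⧸ K), hS0, hS0tor, Cx.subtype.comp
    (g.comp (cS.symm : (↥Cx ⧸ K) →ₗ[R] ↥(σ.ap (↥Cx ⧸ K)))), ?_⟩
  have : Cx.subtype.comp (g.comp (cS.symm : (↥Cx ⧸ K) →ₗ[R] ↥(σ.ap (↥Cx ⧸ K)))) ≠ 0 :=
    Preradical.aux_comp_inj_ne_zero (Submodule.injective_subtype Cx) hg'
  exact LinearMap.injective_of_ne_zero this

end Preradical

/-- For `σ` exact and costable with `R` satisfying `(σ-HH)`: a class `C`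
closed under isomorphism satisfies `(σ-N)` iff it satisfies `(σ-CN)`; in particular the
σ-natural and σ-conatural classes coincide. -/
theorem sigmaN_iff_sigmaCN_of_hh {R : Type u} [Ring R] (σ : Preradical R)
    (hle : σ.LeftExact) (hco : σ.Cohereditary) (hcost : σ.Costable) (hHH : σ.HH)
    (C : RMod R → Prop) (hC : RespectsIso R C) :
    σ.SigmaN C ↔ σ.SigmaCN C := by
  have nontrivN : ∀ N : RMod R, σ.app N ≠ ⊥ → Nontrivial (N : Type u) := by
    intro N hN
    obtain ⟨n, _, hn0⟩ := (σ.app N).ne_bot_iff.mp hN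
    exact ⟨n, 0, hn0⟩
  constructor
  · -- (σ-N) → (σ-CN)
    intro hN M hyp
    apply hN M
    intro L hL
    have hM : σ.app M ≠ ⊥ :=
      σ.aux_ne_bot_of_injective L.subtype (Submodule.injective_subtype L) hL
    obtain ⟨S, hSsimp, hStor, e₁, he₁⟩ := σ.aux_exists_simple hle hco hHH (M := ↥L) hL
    haveI := hSsimp
    haveI : Nontrivial (S : Type u) := IsSimpleModule.nontrivial R (S : Type u)
    have hSne : σ.app S ≠ ⊥ := ne_of_eq_of_ne hStor Preradical.aux_top_ne_bot
    let cS : ↥(σ.app S) ≃ₗ[R] (S : Type u) :=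
      (LinearEquiv.ofEq _ _ hStor).trans Submodule.topEquiv
    haveI : Nontrivial ↥(σ.app S) := Preradical.aux_nontrivial_of_equiv cS.symm
    have hH1 := hHH M S hM hSne
    have hLhs : ∃ f : ↥(σ.app S) →ₗ[R] (M : Type u), f ≠ 0 := by
      refine ⟨(L.subtype.comp e₁).comp (cS : ↥(σ.app S) →ₗ[R] (S : Type u)), ?_⟩
      exact Preradical.aux_injective_ne_zero
        (((Submodule.injective_subtype L).comp he₁).comp cS.injective)
    obtain ⟨p, hp⟩ := hH1.mp hLhs
    have hp' : (cS : (_ : Type u) →ₗ[R] (S : Type u)).comp p ≠ 0 :=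
      Preradical.aux_comp_inj_ne_zero cS.injective hp
    have hp's : Function.Surjective ((cS : (_ : Type u) →ₗ[R] (S : Type u)).comp p) :=
      LinearMap.surjective_of_ne_zero hp'
    obtain ⟨C₀, N, hC₀, hNne, ⟨g, hgs⟩, ⟨h, hhs⟩⟩ := hyp S _ hp's hSne
    haveI : Nontrivial (N : Type u) := nontrivN N hNne
    have hg0 : g ≠ 0 := Preradical.aux_surjective_ne_zero hgs
    have hginj : Function.Injective g := LinearMap.injective_of_ne_zero hg0
    have hC₀ne : σ.app C₀ ≠ ⊥ := σ.aux_ne_bot_of_surjective hco h hhs hNne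
    have hH2 := hHH C₀ S hC₀ne hSne
    let ψ : (S : Type u) ≃ₗ[R] (N : Type u) := LinearEquiv.ofBijective g ⟨hginj, hgs⟩
    have hRhs : ∃ f : (C₀ : Type u) →ₗ[R] ↥(σ.app S), f ≠ 0 := by
      refine ⟨((cS.symm : (S : Type u) →ₗ[R] ↥(σ.app S)).comp
        (ψ.symm : (N : Type u) →ₗ[R] (S : Type u))).comp h, ?_⟩
      exact Preradical.aux_surjective_ne_zero
        ((cS.symm.surjective.comp ψ.symm.surjective).comp hhs)
    obtain ⟨w, hw⟩ := hH2.mpr hRhs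
    have hw' : w.comp (cS.symm : (S : Type u) →ₗ[R] ↥(σ.app S)) ≠ 0 :=
      Preradical.aux_comp_equiv_ne_zero_right cS.symm hw
    exact ⟨C₀, S, hC₀, hSne, ⟨e₁, he₁⟩,
      ⟨w.comp (cS.symm : (S : Type u) →ₗ[R] ↥(σ.app S)),
        LinearMap.injective_of_ne_zero hw'⟩⟩
  · -- (σ-CN) → (σ-N)
    intro hCN M hyp
    apply hCN M
    intro L f hf hLne
    obtain ⟨S, hSsimp, hStor, e₁, he₁⟩ :=
      σ.aux_exists_simple hle hco hHH (M := (L : Type u)) hLne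
    haveI := hSsimp
    haveI : Nontrivial (S : Type u) := IsSimpleModule.nontrivial R (S : Type u)
    have hSne : σ.app S ≠ ⊥ := ne_of_eq_of_ne hStor Preradical.aux_top_ne_bot
    let cS : ↥(σ.app S) ≃ₗ[R] (S : Type u) :=
      (LinearEquiv.ofEq _ _ hStor).trans Submodule.topEquiv
    haveI : Nontrivial ↥(σ.app S) := Preradical.aux_nontrivial_of_equiv cS.symm
    have hH1 := hHH L S hLne hSne
    have hLhs : ∃ f0 : ↥(σ.app S) →ₗ[R] (L : Type u), f0 ≠ 0 :=
      ⟨e₁.comp (cS : ↥(σ.app S) →ₗ[R] (S : Type u)),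
        Preradical.aux_injective_ne_zero (he₁.comp cS.injective)⟩
    obtain ⟨p, hp⟩ := hH1.mp hLhs
    have hq0 : (cS : (_ : Type u) →ₗ[R] (S : Type u)).comp p ≠ 0 :=
      Preradical.aux_comp_inj_ne_zero cS.injective hp
    set q : (L : Type u) →ₗ[R] (S : Type u) :=
      (cS : (_ : Type u) →ₗ[R] (S : Type u)).comp p with hqdef
    have hqs : Function.Surjective q := LinearMap.surjective_of_ne_zero hq0
    have hM : σ.app M ≠ ⊥ := σ.aux_ne_bot_of_surjective hco f hf hLne
    have hH2 := hHH M S hM hSne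
    have hRhs : ∃ f0 : (M : Type u) →ₗ[R] ↥(σ.app S), f0 ≠ 0 :=
      ⟨(cS.symm : (S : Type u) →ₗ[R] ↥(σ.app S)).comp (q.comp f),
        Preradical.aux_surjective_ne_zero (cS.symm.surjective.comp (hqs.comp hf))⟩
    obtain ⟨g, hg⟩ := hH2.mpr hRhs
    have hg'0 : g.comp (cS.symm : (S : Type u) →ₗ[R] ↥(σ.app S)) ≠ 0 :=
      Preradical.aux_comp_equiv_ne_zero_right cS.symm hg
    set g' : (S : Type u) →ₗ[R] (M : Type u) :=
      g.comp (cS.symm : (S : Type u) →ₗ[R] ↥(σ.app S)) with hg'def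
    have hg'inj : Function.Injective g' := LinearMap.injective_of_ne_zero hg'0
    set L' : Submodule R (M : Type u) := LinearMap.range g' with hL'def
    let φ : (S : Type u) ≃ₗ[R] ↥L' := LinearEquiv.ofInjective g' hg'inj
    have hL'tor : σ.ap ↥L' = ⊤ :=
      σ.aux_torsion_of_surjective hco (φ : (S : Type u) →ₗ[R] ↥L') φ.surjective hStor
    haveI : Nontrivial ↥L' := Preradical.aux_nontrivial_of_equiv φ
    have hL'ne : σ.ap ↥L' ≠ ⊥ := ne_of_eq_of_ne hL'tor Preradical.aux_top_ne_bot
    obtain ⟨C₀, N, hC₀, hNne, ⟨u, huinj⟩, ⟨v, hvinj⟩⟩ := hyp L' hL'ne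
    haveI : Nontrivial (N : Type u) := nontrivN N hNne
    have hu'inj : Function.Injective
        ((φ.symm : ↥L' →ₗ[R] (S : Type u)).comp u) := φ.symm.injective.comp huinj
    have hu'0 : (φ.symm : ↥L' →ₗ[R] (S : Type u)).comp u ≠ 0 :=
      Preradical.aux_injective_ne_zero hu'inj
    have hu's : Function.Surjective ((φ.symm : ↥L' →ₗ[R] (S : Type u)).comp u) :=
      LinearMap.surjective_of_ne_zero hu'0
    let ψ : (N : Type u) ≃ₗ[R] (S : Type u) :=
      LinearEquiv.ofBijective _ ⟨hu'inj, hu's⟩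
    have hC₀ne : σ.app C₀ ≠ ⊥ := σ.aux_ne_bot_of_injective v hvinj hNne
    have hH3 := hHH C₀ N hC₀ne hNne
    haveI : Nontrivial ↥(σ.app N) := Preradical.aux_nontrivial_of_ne_bot hNne
    have hLhs3 : ∃ f0 : ↥(σ.app N) →ₗ[R] (C₀ : Type u), f0 ≠ 0 :=
      ⟨v.comp (σ.app N).subtype,
        Preradical.aux_injective_ne_zero (hvinj.comp (Submodule.injective_subtype _))⟩
    obtain ⟨r, hr⟩ := hH3.mp hLhs3
    have hr'0 : (ψ : (N : Type u) →ₗ[R] (S : Type u)).comp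
        ((σ.app N).subtype.comp r) ≠ 0 :=
      Preradical.aux_comp_inj_ne_zero ψ.injective
        (Preradical.aux_comp_inj_ne_zero (Submodule.injective_subtype _) hr)
    exact ⟨C₀, S, hC₀, hSne, ⟨q, hqs⟩,
      ⟨(ψ : (N : Type u) →ₗ[R] (S : Type u)).comp ((σ.app N).subtype.comp r),
        LinearMap.surjective_of_ne_zero hr'0⟩⟩
end
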